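/- arXiv:1701.04167 — 7 statements merged into one kernel-verified Lean document; each statement's English description precedes it below -/
import Mathlib

section
/- (Theorem 2.1) Suppose the edge set E forms a tree on Fin n. Given univariate pmfs μ_i on C i for each i ∈ Fin n and bivariate pmfs μ_{ij} on C i × C j for each (i,j) ∈ E, for every ρ ≥ 0 the following are equivalent: (a) there exist a joint distribution θ and bivariate pmfs θ_{ij} on C i × C j for (i,j) ∈ E such that proj_i θ = μ_i for all i, proj_{ij} θ = θ_{ij} for all (i,j) ∈ E, and for every (i,j) ∈ E, θ_{ij} vanishes wherever μ_{ij} vanishes and I_KL(θ_{ij}, μ_{ij}) ≤ ρ; (b) there exist bivariate pmfs θ_{ij} on C i × C j for (i,j) ∈ E such that for every (i,j) ∈ E, Σ_y θ_{ij}(x,y) = μ_i(x) for all x ∈ C i, Σ_x θ_{ij}(x,y) = μ_j(y) for all y ∈ C j, θ_{ij} vanishes wherever μ_{ij} vanishes, and I_KL(θ_{ij}, μ_{ij}) ≤ ρ. Consequently, the infimum of the set of ρ ≥ 0 satisfying (a) equals the infimum of the set of ρ ≥ 0 satisfying (b). -/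
open Finset

noncomputable section

abbrev Pt {n : ℕ} (C : Fin n → Finset ℝ) := (i : Fin n) → {x : ℝ // x ∈ C i}

def IsJoint {n : ℕ} {C : Fin n → Finset ℝ} (θ : Pt C → ℝ) : Prop :=
  (∀ c, 0 ≤ θ c) ∧ ∑ c : Pt C, θ c = 1

def projUni {n : ℕ} {C : Fin n → Finset ℝ} (θ : Pt C → ℝ) (i : Fin n)
    (x : {x : ℝ // x ∈ C i}) : ℝ :=
  ∑ c : Pt C, if c i = x then θ c else 0

def projBi {n : ℕ} {C : Fin n → Finset ℝ} (θ : Pt C → ℝ) (i j : Fin n)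
    (p : {x : ℝ // x ∈ C i} × {y : ℝ // y ∈ C j}) : ℝ :=
  ∑ c : Pt C, if c i = p.1 ∧ c j = p.2 then θ c else 0

def IsPmf {S : Type*} [Fintype S] (p : S → ℝ) : Prop :=
  (∀ s, 0 ≤ p s) ∧ ∑ s, p s = 1

def KL {S : Type*} [Fintype S] (p q : S → ℝ) : ℝ :=
  ∑ s, if 0 < p s then p s * Real.log (p s / q s) else 0

def Vanishes {S : Type*} (p q : S → ℝ) : Prop := ∀ s, q s = 0 → p s = 0

def treeGraph {n : ℕ} (E : Finset (Fin n × Fin n)) : SimpleGraph (Fin n) :=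
  SimpleGraph.fromRel (fun i j => (i, j) ∈ E)

def IsTreeEdges {n : ℕ} (E : Finset (Fin n × Fin n)) : Prop :=
  (∀ e ∈ E, e.1 < e.2) ∧ (treeGraph E).IsTree

def psi {n : ℕ} {C : Fin n → Finset ℝ} {K : ℕ} (a : Fin K → Fin n → ℝ) (b : Fin K → ℝ)
    (c : Pt C) : ℝ :=
  ⨆ k : Fin K, (∑ i, a k i * (c i : ℝ) + b k)

def InTheta {n : ℕ} {C : Fin n → Finset ℝ} (E : Finset (Fin n × Fin n))
    (μU : (i : Fin n) → {x : ℝ // x ∈ C i} → ℝ)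
    (μB : (i j : Fin n) → ({x : ℝ // x ∈ C i} × {y : ℝ // y ∈ C j}) → ℝ)
    (ρ : ℝ) (θ : Pt C → ℝ) : Prop :=
  IsJoint θ ∧ (∀ i, projUni θ i = μU i) ∧
  ∀ i j, (i, j) ∈ E →
    Vanishes (projBi θ i j) (μB i j) ∧ KL (projBi θ i j) (μB i j) ≤ ρ

/-- Feasibility of (a) in Theorem 2.1: there is a joint distribution with the given
univariate marginals whose bivariate marginals on the edges lie within KL-distance `ρ`
of the given bivariate marginals. -/
def FeasA {n : ℕ} {C : Fin n → Finset ℝ} (E : Finset (Fin n × Fin n))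
    (μU : (i : Fin n) → {x : ℝ // x ∈ C i} → ℝ)
    (μB : (i j : Fin n) → ({x : ℝ // x ∈ C i} × {y : ℝ // y ∈ C j}) → ℝ)
    (ρ : ℝ) : Prop :=
  ∃ (θ : Pt C → ℝ)
    (θB : (i j : Fin n) → ({x : ℝ // x ∈ C i} × {y : ℝ // y ∈ C j}) → ℝ),
    IsJoint θ ∧
    (∀ i, projUni θ i = μU i) ∧
    (∀ i j, (i, j) ∈ E → IsPmf (θB i j)) ∧
    (∀ i j, (i, j) ∈ E → projBi θ i j = θB i j) ∧
    (∀ i j, (i, j) ∈ E → Vanishes (θB i j) (μB i j)) ∧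
    (∀ i j, (i, j) ∈ E → KL (θB i j) (μB i j) ≤ ρ)

/-- Feasibility of (b) in Theorem 2.1: there are bivariate pmfs on the edges that are
consistent with the given univariate marginals and lie within KL-distance `ρ` of the
given bivariate marginals. -/
def FeasB {n : ℕ} {C : Fin n → Finset ℝ} (E : Finset (Fin n × Fin n))
    (μU : (i : Fin n) → {x : ℝ // x ∈ C i} → ℝ)
    (μB : (i j : Fin n) → ({x : ℝ // x ∈ C i} × {y : ℝ // y ∈ C j}) → ℝ)
    (ρ : ℝ) : Prop :=
  ∃ θB : (i j : Fin n) → ({x : ℝ // x ∈ C i} × {y : ℝ // y ∈ C j}) → ℝ,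
    (∀ i j, (i, j) ∈ E → IsPmf (θB i j)) ∧
    (∀ i j, (i, j) ∈ E → ∀ x : {x : ℝ // x ∈ C i},
      ∑ y : {y : ℝ // y ∈ C j}, θB i j (x, y) = μU i x) ∧
    (∀ i j, (i, j) ∈ E → ∀ y : {y : ℝ // y ∈ C j},
      ∑ x : {x : ℝ // x ∈ C i}, θB i j (x, y) = μU j y) ∧
    (∀ i j, (i, j) ∈ E → Vanishes (θB i j) (μB i j)) ∧
    (∀ i j, (i, j) ∈ E → KL (θB i j) (μB i j) ≤ ρ)

/-!
For (a) ⇒ (b), the bivariate marginals of a joint distribution have the univariate marginals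
as their own marginals. For (b) ⇒ (a), root the tree at `r`, write `p v` for the parent of `v`
and `K v x y` for the conditional law of the child coordinate given the parent coordinate
under the edge pmf, and take the Markov distribution
`θ c = μ_r (c r) * ∏_{v ≠ r} K v (c (p v)) (c v)`. Its marginals are computed by stripping
leaves: the factor `K v (c (p v)) (c v)` of a childless vertex can be replaced by `μ_v (c v)`,
since both are probability vectors in `c v`. Stripping all vertices deeper than `v` shows
that the marginal of `θ` on the edge `(p v, v)` is `μ_{p v} x * K v x y = θ_{p v, v} (x, y)`,
and the univariate marginals follow by induction on the depth. So the two feasible sets coincide,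
and so do their infima.
-/

section PiSum
variable {ι : Type*} [Fintype ι] [DecidableEq ι] {β : ι → Type*} [∀ i, Fintype (β i)]

theorem Fintype.sum_ite_apply_eq_of_update_eq {M : Type*} [AddCommMonoid M]
    [∀ i, DecidableEq (β i)] (ℓ : ι) (y z : β ℓ) (f : (∀ i, β i) → M)
    (hf : ∀ c w, f (Function.update c ℓ w) = f c) :
    ∑ c, (if c ℓ = y then f c else 0) = ∑ c, (if c ℓ = z then f c else 0) := by
  rw [← sum_filter, ← sum_filter]
  refine sum_nbij' (Function.update · ℓ z) (Function.update · ℓ y) ?_ ?_ ?_ ?_ ?_ <;>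
    simp +contextual [hf]

theorem Fintype.sum_apply_self_eq_sum_ite {M : Type*} [AddCommMonoid M]
    [∀ i, DecidableEq (β i)] (ℓ : ι) (z : β ℓ) (a : (∀ i, β i) → β ℓ → M)
    (ha : ∀ c w, a (Function.update c ℓ w) = a c) :
    ∑ c, a c (c ℓ) = ∑ c, if c ℓ = z then ∑ y, a c y else 0 := by
  calc ∑ c, a c (c ℓ) = ∑ y, ∑ c, if c ℓ = y then a c y else 0 := by
        rw [sum_comm]; simp
    _ = ∑ y, ∑ c, if c ℓ = z then a c y else 0 :=
        Finset.sum_congr rfl fun y _ =>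
          Fintype.sum_ite_apply_eq_of_update_eq ℓ y z _ fun c w => by rw [ha]
    _ = ∑ c, if c ℓ = z then ∑ y, a c y else 0 := by
        rw [sum_comm]; simp [sum_ite_irrel]

theorem Fintype.sum_apply_self_eq_of_sum_eq {M : Type*} [AddCommMonoid M] (ℓ : ι)
    (a b : (∀ i, β i) → β ℓ → M) (ha : ∀ c w, a (Function.update c ℓ w) = a c)
    (hb : ∀ c w, b (Function.update c ℓ w) = b c) (hab : ∀ c, ∑ y, a c y = ∑ y, b c y) :
    ∑ c, a c (c ℓ) = ∑ c, b c (c ℓ) := by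
  classical
  rcases isEmpty_or_nonempty (β ℓ) with hℓ | ⟨⟨z⟩⟩
  · have : IsEmpty (∀ i, β i) := isEmpty_pi.mpr ⟨ℓ, hℓ⟩
    simp [univ_eq_empty]
  · simp only [Fintype.sum_apply_self_eq_sum_ite ℓ z _ ha,
      Fintype.sum_apply_self_eq_sum_ite ℓ z _ hb, hab]

theorem Fintype.sum_prod_mul_apply {R : Type*} [CommSemiring R] (μ : ∀ i, β i → R)
    (hμ : ∀ i, ∑ x, μ i x = 1) (v : ι) (g : β v → R) :
    ∑ c : ∀ i, β i, (∏ i, μ i (c i)) * g (c v) = ∑ x, μ v x * g x := by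
  let rest : (∀ i, β i) → R := fun c => ∏ i ∈ univ.erase v, μ i (c i)
  have hrest : ∀ c w, rest (Function.update c v w) = rest c := fun c w =>
    Finset.prod_congr rfl fun i hi => by rw [Function.update_of_ne (ne_of_mem_erase hi)]
  have hsplit : ∀ c : ∀ i, β i, ∏ i, μ i (c i) = rest c * μ v (c v) := fun c =>
    (Finset.prod_erase_mul univ _ (mem_univ v)).symm
  set S := ∑ x, μ v x * g x
  calc ∑ c : ∀ i, β i, (∏ i, μ i (c i)) * g (c v)
      = ∑ c : ∀ i, β i, rest c * (μ v (c v) * g (c v)) := by simp only [hsplit, mul_assoc]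
    _ = ∑ c : ∀ i, β i, rest c * (μ v (c v) * S) :=
        Fintype.sum_apply_self_eq_of_sum_eq v (fun c y => rest c * (μ v y * g y))
          (fun c y => rest c * (μ v y * S)) (fun c w => by simp only [hrest])
          (fun c w => by simp only [hrest]) fun c => by simp [S, ← mul_sum, ← sum_mul, hμ]
    _ = (∑ c : ∀ i, β i, ∏ i, μ i (c i)) * S := by simp only [hsplit, sum_mul, mul_assoc]
    _ = S := by rw [← Fintype.prod_sum, Finset.prod_eq_one fun i _ => hμ i, one_mul]

end PiSum

namespace SimpleGraph
variable {V : Type*} {G : SimpleGraph V}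

theorem Connected.exists_adj_dist_add_one (hG : G.Connected) {i r : V} (hi : i ≠ r) :
    ∃ j, G.Adj i j ∧ G.dist j r + 1 = G.dist i r := by
  obtain ⟨w, hw⟩ := hG.exists_walk_length_eq_dist i r
  have hw' : ¬ w.Nil := Walk.not_nil_of_ne hi
  refine ⟨w.snd, w.adj_snd hw', le_antisymm ?_ ?_⟩
  · have := dist_le w.tail
    have := w.length_tail
    have : 0 < w.length := Walk.not_nil_iff_lt_length.mp hw'
    omega
  · calc G.dist i r ≤ G.dist i w.snd + G.dist w.snd r := hG.dist_triangle
      _ = G.dist w.snd r + 1 := by rw [dist_eq_one_iff_adj.mpr (w.adj_snd hw'), add_comm]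

/-- The `card V - 1` parent edges already exhaust the `card V - 1` edges of the tree. -/
theorem IsTree.exists_parent [Fintype V] (hG : G.IsTree) (r : V) :
    ∃ p : V → V, (∀ i, i ≠ r → G.Adj i (p i) ∧ G.dist (p i) r + 1 = G.dist i r) ∧
      ∀ i j, G.Adj i j → (j ≠ r ∧ p j = i) ∨ (i ≠ r ∧ p i = j) := by
  classical
  choose! p hp using fun i (hi : i ≠ r) => hG.connected.exists_adj_dist_add_one hi
  refine ⟨p, hp, ?_⟩
  let parentEdges := (univ.erase r).image fun i => s(i, p i)
  have hsub : parentEdges ⊆ G.edgeFinset := by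
    simp only [parentEdges, image_subset_iff, mem_erase, mem_univ, and_true, mem_edgeFinset,
      mem_edgeSet]
    exact fun i hi => (hp i hi).1
  have hinj : Set.InjOn (fun i => s(i, p i)) (univ.erase r : Finset V) := by
    intro i hi j hj hij
    have hi := (hp i (ne_of_mem_erase hi)).2
    have hj := (hp j (ne_of_mem_erase hj)).2
    rcases Sym2.eq_iff.mp hij with h | ⟨rfl, h⟩
    · exact h.1
    · rw [h] at hi; omega
  have hcard : G.edgeFinset.card ≤ parentEdges.card := by
    rw [card_image_of_injOn hinj, card_erase_of_mem (mem_univ r), card_univ,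
      ← hG.card_edgeFinset]
    omega
  intro i j hij
  have : s(i, j) ∈ parentEdges :=
    eq_of_subset_of_card_le hsub hcard ▸ mem_edgeFinset.mpr hij
  obtain ⟨k, hk, hkij⟩ := mem_image.mp this
  rcases Sym2.eq_iff.mp hkij with ⟨rfl, h⟩ | ⟨rfl, h⟩
  · exact Or.inr ⟨ne_of_mem_erase hk, h⟩
  · exact Or.inl ⟨ne_of_mem_erase hk, h⟩

end SimpleGraph

section MarkovTree
variable {ι : Type*} [Fintype ι] [DecidableEq ι] {β : ι → Type*} [∀ i, Fintype (β i)]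
  (μ : ∀ i, β i → ℝ) {p : ι → ι} (K : ∀ i, β (p i) → β i → ℝ)

/-- Vertices in `W` are drawn from `K` given their parent, the others independently from `μ`.
With `W = univ.erase r` this is the Markov distribution of the tree rooted at `r`. -/
def markovTreeWeight (W : Finset ι) (c : ∀ i, β i) : ℝ :=
  ∏ i, if i ∈ W then K i (c (p i)) (c i) else μ i (c i)

theorem sum_markovTreeWeight_mul_of_leaf {W : Finset ι} {ℓ : ι} (hμ : ∑ y, μ ℓ y = 1)
    (hℓ : ℓ ∈ W) (hpℓ : p ℓ ≠ ℓ) (hleaf : ∀ j ∈ W, p j ≠ ℓ)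
    (g : (∀ i, β i) → β ℓ → ℝ) (hg : ∀ c w, g (Function.update c ℓ w) = g c) :
    ∑ c, markovTreeWeight μ K W c * g c (c ℓ) =
      ∑ c, markovTreeWeight μ K (W.erase ℓ) c * ∑ y, K ℓ (c (p ℓ)) y * g c y := by
  let rest : (∀ i, β i) → ℝ := fun c =>
    ∏ i ∈ univ.erase ℓ, if i ∈ W then K i (c (p i)) (c i) else μ i (c i)
  have hrest : ∀ c w, rest (Function.update c ℓ w) = rest c := fun c w =>
    prod_congr rfl fun i hi => by
      have hiℓ := ne_of_mem_erase hi
      split_ifs with hiW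
      · rw [Function.update_of_ne hiℓ, Function.update_of_ne (hleaf i hiW)]
      · rw [Function.update_of_ne hiℓ]
  have hW : ∀ c, markovTreeWeight μ K W c = rest c * K ℓ (c (p ℓ)) (c ℓ) := fun c => by
    rw [markovTreeWeight, ← prod_erase_mul univ _ (mem_univ ℓ), if_pos hℓ]
  have hWℓ : ∀ c, markovTreeWeight μ K (W.erase ℓ) c = rest c * μ ℓ (c ℓ) := fun c => by
    rw [markovTreeWeight, ← prod_erase_mul univ _ (mem_univ ℓ), if_neg (notMem_erase ℓ W)]
    refine congrArg (· * _) (prod_congr rfl fun i hi => ?_)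
    simp only [mem_erase, ne_of_mem_erase hi, ne_eq, not_false_eq_true, true_and]
  set S : (∀ i, β i) → ℝ := fun c => ∑ y, K ℓ (c (p ℓ)) y * g c y
  have hS : ∀ c w, S (Function.update c ℓ w) = S c := fun c w => by
    simp only [S, hg, Function.update_of_ne hpℓ]
  calc ∑ c, markovTreeWeight μ K W c * g c (c ℓ)
      = ∑ c, rest c * (K ℓ (c (p ℓ)) (c ℓ) * g c (c ℓ)) := by simp only [hW, mul_assoc]
    _ = ∑ c, rest c * (μ ℓ (c ℓ) * S c) :=
        Fintype.sum_apply_self_eq_of_sum_eq ℓ (fun c y => rest c * (K ℓ (c (p ℓ)) y * g c y))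
          (fun c y => rest c * (μ ℓ y * S c))
          (fun c w => by simp only [hrest, hg, Function.update_of_ne hpℓ])
          (fun c w => by simp only [hrest, hS])
          fun c => by simp only [← mul_sum, ← sum_mul, hμ, one_mul, S]
    _ = ∑ c, markovTreeWeight μ K (W.erase ℓ) c * S c := by simp only [hWℓ, mul_assoc]

variable {r : ι} {dep : ι → ℕ}

theorem sum_markovTreeWeight_mul_of_parent_mem (hμ : ∀ i, ∑ y, μ i y = 1)
    (hK : ∀ i, i ≠ r → ∀ x, ∑ y, K i x y = 1) (hdep : ∀ i, i ≠ r → dep (p i) + 1 = dep i)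
    {W : Finset ι} (hrW : r ∉ W) (hW : ∀ i ∈ W, p i ∈ insert r W) (h : (∀ i, β i) → ℝ)
    (hh : ∀ ℓ ∉ insert r W, ∀ c w, h (Function.update c ℓ w) = h c) :
    ∑ c, markovTreeWeight μ K (univ.erase r) c * h c = ∑ c, markovTreeWeight μ K W c * h c := by
  obtain ⟨k, hk⟩ : ∃ k, (univ.erase r \ W).card = k := ⟨_, rfl⟩
  induction k generalizing W with
  | zero =>
    have hsub : univ.erase r ⊆ W := sdiff_eq_empty_iff_subset.mp (card_eq_zero.mp hk)
    have hsub' : W ⊆ univ.erase r := fun i hi =>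
      mem_erase.mpr ⟨by rintro rfl; exact hrW hi, mem_univ i⟩
    rw [subset_antisymm hsub' hsub]
  | succ k ih =>
    obtain ⟨ℓ, hℓ, hmin⟩ := exists_min_image (univ.erase r \ W) dep (card_pos.mp (by omega))
    obtain ⟨hℓr, hℓW⟩ : ℓ ≠ r ∧ ℓ ∉ W := by simpa using hℓ
    have hpℓ : p ℓ ∈ insert r W := by
      by_contra hpℓ
      have := hmin (p ℓ) (by simpa [not_or] using hpℓ)
      have := hdep ℓ hℓr
      omega
    have hpℓℓ : p ℓ ≠ ℓ := ne_of_apply_ne dep (by have := hdep ℓ hℓr; omega)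
    have hleaf : ∀ j ∈ insert ℓ W, p j ≠ ℓ := by
      intro j hj hpj
      rcases mem_insert.mp hj with rfl | hj
      · exact hpℓℓ hpj
      · exact (mem_insert.mp (hpj ▸ hW j hj)).elim hℓr hℓW
    have hsub : insert r W ⊆ insert r (insert ℓ W) := insert_subset_insert r (subset_insert ℓ W)
    rw [ih (W := insert ℓ W) (by simp [hℓr.symm, hrW])
        (fun i hi => hsub (by rcases mem_insert.mp hi with rfl | hi; exacts [hpℓ, hW i hi]))
        (fun ℓ' hℓ' => hh ℓ' fun h => hℓ' (hsub h))
        (by rw [sdiff_insert, card_erase_of_mem hℓ, hk]; rfl),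
      sum_markovTreeWeight_mul_of_leaf μ K (hμ ℓ) (mem_insert_self ℓ W) hpℓℓ hleaf
        (fun c _ => h c) (fun c w => by rw [hh ℓ (by simp [hℓr, hℓW])]), erase_insert hℓW]
    simp only [← sum_mul, hK ℓ hℓr, one_mul]

theorem sum_markovTreeWeight_mul_eq_sum_kernel (hμ : ∀ i, ∑ y, μ i y = 1)
    (hK : ∀ i, i ≠ r → ∀ x, ∑ y, K i x y = 1) (hdep : ∀ i, i ≠ r → dep (p i) + 1 = dep i)
    {v : ι} (hv : v ≠ r) (h : β (p v) → β v → ℝ) :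
    ∑ c, markovTreeWeight μ K (univ.erase r) c * h (c (p v)) (c v) =
      ∑ c, markovTreeWeight μ K (univ.erase r) c * ∑ y, K v (c (p v)) y * h (c (p v)) y := by
  let W := (univ.erase r).filter (dep · ≤ dep v)
  have hmem : ∀ i, i ∈ W ↔ i ≠ r ∧ dep i ≤ dep v := by simp [W]
  have hpar : ∀ i ∈ W, p i ∈ insert r (W.erase v) := by
    intro i hi
    obtain ⟨hir, hiv⟩ := (hmem i).mp hi
    have := hdep i hir
    by_cases hpi : p i = r
    · exact mem_insert.mpr (Or.inl hpi)
    · exact mem_insert_of_mem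
        (mem_erase.mpr ⟨ne_of_apply_ne dep (by omega), (hmem _).mpr ⟨hpi, by omega⟩⟩)
  have hsub : insert r (W.erase v) ⊆ insert r W := insert_subset_insert r (erase_subset v W)
  have hvW : v ∈ W := (hmem v).mpr ⟨hv, le_rfl⟩
  have hpv := hpar v hvW
  have hpvv : p v ≠ v := ne_of_apply_ne dep (by have := hdep v hv; omega)
  rw [sum_markovTreeWeight_mul_of_parent_mem μ K hμ hK hdep (W := W) (by simp [hmem])
      (fun i hi => hsub (hpar i hi)) _ fun ℓ hℓ c w => by
        rw [Function.update_of_ne (by rintro rfl; exact hℓ (hsub hpv)),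
          Function.update_of_ne (by rintro rfl; exact hℓ (mem_insert_of_mem hvW))],
    sum_markovTreeWeight_mul_of_leaf μ K (hμ v) hvW hpvv
      (fun j hj hjv => by simpa [hjv, hv] using hpar j hj) (fun c y => h (c (p v)) y)
      fun c w => by rw [Function.update_of_ne hpvv],
    sum_markovTreeWeight_mul_of_parent_mem μ K hμ hK hdep (W := W.erase v) (by simp [hmem])
      (fun i hi => hpar i (mem_of_mem_erase hi)) _ fun ℓ hℓ c w => by
        rw [Function.update_of_ne (by rintro rfl; exact hℓ hpv)]]

theorem sum_markovTreeWeight_mul_apply (hμ : ∀ i, ∑ y, μ i y = 1)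
    (hK : ∀ i, i ≠ r → ∀ x, ∑ y, K i x y = 1) (hdep : ∀ i, i ≠ r → dep (p i) + 1 = dep i)
    (hpush : ∀ i, i ≠ r → ∀ y, ∑ x, μ (p i) x * K i x y = μ i y) (v : ι) (g : β v → ℝ) :
    ∑ c, markovTreeWeight μ K (univ.erase r) c * g (c v) = ∑ x, μ v x * g x := by
  induction hd : dep v using Nat.strong_induction_on generalizing v with
  | _ d ih =>
  by_cases hv : v = r
  · subst hv
    rw [sum_markovTreeWeight_mul_of_parent_mem μ K hμ hK hdep (W := ∅) (notMem_empty v)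
      (by simp) _ fun ℓ hℓ c w => by rw [Function.update_of_ne (Ne.symm (by simpa using hℓ))]]
    simpa [markovTreeWeight] using Fintype.sum_prod_mul_apply μ hμ v g
  · rw [sum_markovTreeWeight_mul_eq_sum_kernel μ K hμ hK hdep hv fun _ y => g y,
      ih (dep (p v)) (hd ▸ hdep v hv ▸ Nat.lt_succ_self _) (p v)
        (fun x => ∑ y, K v x y * g y) rfl]
    simp_rw [mul_sum, ← hpush v hv, sum_mul, mul_assoc]
    exact sum_comm

theorem sum_markovTreeWeight_mul_apply_parent (hμ : ∀ i, ∑ y, μ i y = 1)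
    (hK : ∀ i, i ≠ r → ∀ x, ∑ y, K i x y = 1) (hdep : ∀ i, i ≠ r → dep (p i) + 1 = dep i)
    (hpush : ∀ i, i ≠ r → ∀ y, ∑ x, μ (p i) x * K i x y = μ i y) {v : ι} (hv : v ≠ r)
    (h : β (p v) → β v → ℝ) :
    ∑ c, markovTreeWeight μ K (univ.erase r) c * h (c (p v)) (c v) =
      ∑ x, ∑ y, μ (p v) x * K v x y * h x y := by
  rw [sum_markovTreeWeight_mul_eq_sum_kernel μ K hμ hK hdep hv,
    sum_markovTreeWeight_mul_apply μ K hμ hK hdep hpush (p v) fun x => ∑ y, K v x y * h x y]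
  simp_rw [mul_sum, mul_assoc]

end MarkovTree

section Coupling
variable {X Y : Type*} [Fintype X] [Fintype Y]

def IsCoupling (Q : X × Y → ℝ) (μX : X → ℝ) (μY : Y → ℝ) : Prop :=
  (∀ s, 0 ≤ Q s) ∧ (∀ x, ∑ y, Q (x, y) = μX x) ∧ ∀ y, ∑ x, Q (x, y) = μY y

def condOfJoint (Q : X × Y → ℝ) (μX : X → ℝ) (μY : Y → ℝ) (x : X) (y : Y) : ℝ :=
  if μX x = 0 then μY y else Q (x, y) / μX x

variable {Q : X × Y → ℝ} {μX : X → ℝ} {μY : Y → ℝ}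

theorem IsCoupling.swap (hQ : IsCoupling Q μX μY) : IsCoupling (Q ∘ Prod.swap) μY μX :=
  ⟨fun s => hQ.1 s.swap, hQ.2.2, hQ.2.1⟩

theorem IsCoupling.condOfJoint_nonneg (hQ : IsCoupling Q μX μY) (x : X) (y : Y) :
    0 ≤ condOfJoint Q μX μY x y := by
  unfold condOfJoint
  split_ifs
  · rw [← hQ.2.2 y]; exact sum_nonneg fun x _ => hQ.1 _
  · exact div_nonneg (hQ.1 _) (hQ.2.1 x ▸ sum_nonneg fun y _ => hQ.1 _)

theorem IsCoupling.sum_condOfJoint (hQ : IsCoupling Q μX μY) (hμY : ∑ y, μY y = 1) (x : X) :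
    ∑ y, condOfJoint Q μX μY x y = 1 := by
  unfold condOfJoint
  split_ifs with hx
  · exact hμY
  · rw [← sum_div, hQ.2.1 x, div_self hx]

theorem IsCoupling.mul_condOfJoint (hQ : IsCoupling Q μX μY) (x : X) (y : Y) :
    μX x * condOfJoint Q μX μY x y = Q (x, y) := by
  unfold condOfJoint
  split_ifs with hx
  · rw [hx, zero_mul, eq_comm]
    exact (sum_eq_zero_iff_of_nonneg fun y _ => hQ.1 (x, y)).mp (hx ▸ hQ.2.1 x) y (mem_univ y)
  · exact mul_div_cancel₀ _ hx

theorem IsCoupling.sum_mul_condOfJoint (hQ : IsCoupling Q μX μY) (y : Y) :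
    ∑ x, μX x * condOfJoint Q μX μY x y = μY y := by
  simp only [hQ.mul_condOfJoint, hQ.2.2 y]

end Coupling

section Marginals
variable {n : ℕ} {C : Fin n → Finset ℝ}

theorem sum_projBi_snd (θ : Pt C → ℝ) (i j : Fin n) (x : {x : ℝ // x ∈ C i}) :
    ∑ y, projBi θ i j (x, y) = projUni θ i x := by
  simp only [projBi, projUni]
  rw [sum_comm]
  refine Finset.sum_congr rfl fun c _ => ?_
  by_cases h : c i = x <;> simp [h]

theorem sum_projBi_fst (θ : Pt C → ℝ) (i j : Fin n) (y : {y : ℝ // y ∈ C j}) :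
    ∑ x, projBi θ i j (x, y) = projUni θ j y := by
  simp only [projBi, projUni]
  rw [sum_comm]
  refine Finset.sum_congr rfl fun c _ => ?_
  by_cases h : c j = y <;> simp [h]

theorem projBi_swap (θ : Pt C → ℝ) (i j : Fin n)
    (s : {x : ℝ // x ∈ C i} × {y : ℝ // y ∈ C j}) : projBi θ i j s = projBi θ j i s.swap := by
  simp only [projBi, Prod.fst_swap, Prod.snd_swap, and_comm]

variable (μ : (i : Fin n) → {x : ℝ // x ∈ C i} → ℝ) {p : Fin n → Fin n}
  (K : (i : Fin n) → {x : ℝ // x ∈ C (p i)} → {y : ℝ // y ∈ C i} → ℝ) {r : Fin n}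
  {dep : Fin n → ℕ}

theorem isJoint_markovTreeWeight (hμ : ∀ i, IsPmf (μ i))
    (hK₀ : ∀ i, i ≠ r → ∀ x y, 0 ≤ K i x y) (hK : ∀ i, i ≠ r → ∀ x, ∑ y, K i x y = 1)
    (hdep : ∀ i, i ≠ r → dep (p i) + 1 = dep i)
    (hpush : ∀ i, i ≠ r → ∀ y, ∑ x, μ (p i) x * K i x y = μ i y) :
    IsJoint (markovTreeWeight μ K (univ.erase r)) := by
  refine ⟨fun c => prod_nonneg fun v _ => ?_, ?_⟩
  · split_ifs with hv
    exacts [hK₀ v (ne_of_mem_erase hv) _ _, (hμ v).1 _]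
  · simpa only [mul_one, (hμ _).2] using
      sum_markovTreeWeight_mul_apply μ K (fun i => (hμ i).2) hK hdep hpush r fun _ => 1

theorem projUni_markovTreeWeight (hμ : ∀ i, ∑ y, μ i y = 1)
    (hK : ∀ i, i ≠ r → ∀ x, ∑ y, K i x y = 1) (hdep : ∀ i, i ≠ r → dep (p i) + 1 = dep i)
    (hpush : ∀ i, i ≠ r → ∀ y, ∑ x, μ (p i) x * K i x y = μ i y) (v : Fin n) :
    projUni (markovTreeWeight μ K (univ.erase r)) v = μ v := by
  ext x
  simpa only [projUni, mul_boole, sum_ite_eq', mem_univ, if_true] using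
    sum_markovTreeWeight_mul_apply μ K hμ hK hdep hpush v fun x' => if x' = x then 1 else 0

theorem projBi_markovTreeWeight_parent (hμ : ∀ i, ∑ y, μ i y = 1)
    (hK : ∀ i, i ≠ r → ∀ x, ∑ y, K i x y = 1) (hdep : ∀ i, i ≠ r → dep (p i) + 1 = dep i)
    (hpush : ∀ i, i ≠ r → ∀ y, ∑ x, μ (p i) x * K i x y = μ i y) {v : Fin n} (hv : v ≠ r)
    (s : {x : ℝ // x ∈ C (p v)} × {y : ℝ // y ∈ C v}) :
    projBi (markovTreeWeight μ K (univ.erase r)) (p v) v s = μ (p v) s.1 * K v s.1 s.2 := by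
  have := sum_markovTreeWeight_mul_apply_parent μ K hμ hK hdep hpush hv
    fun x y => if x = s.1 ∧ y = s.2 then 1 else 0
  simp only [mul_boole] at this
  rw [projBi, this]
  simp [ite_and]

end Marginals

theorem exists_joint_of_isCoupling {n : ℕ} {C : Fin n → Finset ℝ} {E : Finset (Fin n × Fin n)}
    (hE : IsTreeEdges E) (μU : (i : Fin n) → {x : ℝ // x ∈ C i} → ℝ) (hμU : ∀ i, IsPmf (μU i))
    (θB : (i j : Fin n) → ({x : ℝ // x ∈ C i} × {y : ℝ // y ∈ C j}) → ℝ)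
    (hθB : ∀ i j, (i, j) ∈ E → IsCoupling (θB i j) (μU i) (μU j)) :
    ∃ θ : Pt C → ℝ, IsJoint θ ∧ (∀ i, projUni θ i = μU i) ∧
      ∀ i j, (i, j) ∈ E → projBi θ i j = θB i j := by
  obtain ⟨r⟩ := hE.2.connected.nonempty
  obtain ⟨p, hp, hedge⟩ := hE.2.exists_parent r
  let Q : ∀ v, {x : ℝ // x ∈ C (p v)} × {y : ℝ // y ∈ C v} → ℝ := fun v =>
    if (p v, v) ∈ E then θB (p v) v else θB v (p v) ∘ Prod.swap
  have hQ : ∀ v, v ≠ r → IsCoupling (Q v) (μU (p v)) (μU v) := by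
    intro v hv
    simp only [Q]
    split_ifs with h
    · exact hθB _ _ h
    · have hadj := (hp v hv).1
      rw [treeGraph, SimpleGraph.fromRel_adj] at hadj
      exact (hθB _ _ (hadj.2.resolve_right h)).swap
  let K v := condOfJoint (Q v) (μU (p v)) (μU v)
  have hμ i : ∑ x, μU i x = 1 := (hμU i).2
  have hK v (hv : v ≠ r) : ∀ x, ∑ y, K v x y = 1 := (hQ v hv).sum_condOfJoint (hμ v)
  let dep : Fin n → ℕ := ((treeGraph E).dist · r)
  have hdep v (hv : v ≠ r) : dep (p v) + 1 = dep v := (hp v hv).2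
  have hpush v (hv : v ≠ r) : ∀ y, ∑ x, μU (p v) x * K v x y = μU v y :=
    (hQ v hv).sum_mul_condOfJoint
  refine ⟨markovTreeWeight μU K (univ.erase r),
    isJoint_markovTreeWeight μU K hμU (fun v hv => (hQ v hv).condOfJoint_nonneg) hK hdep hpush,
    projUni_markovTreeWeight μU K hμ hK hdep hpush, fun i j hij => funext fun s => ?_⟩
  have hadj : (treeGraph E).Adj i j := by
    rw [treeGraph, SimpleGraph.fromRel_adj]
    exact ⟨(hE.1 _ hij).ne, Or.inl hij⟩
  rcases hedge i j hadj with ⟨hj, rfl⟩ | ⟨hi, rfl⟩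
  · rw [projBi_markovTreeWeight_parent μU K hμ hK hdep hpush hj, (hQ j hj).mul_condOfJoint]
    simp [Q, hij]
  · have hji : (p i, i) ∉ E := fun hji => (hE.1 _ hij).not_gt (hE.1 _ hji)
    rw [projBi_swap, projBi_markovTreeWeight_parent μU K hμ hK hdep hpush hi,
      (hQ i hi).mul_condOfJoint]
    simp [Q, hji]

theorem feasA_iff_feasB {n : ℕ} {C : Fin n → Finset ℝ} {E : Finset (Fin n × Fin n)}
    (hE : IsTreeEdges E) {μU : (i : Fin n) → {x : ℝ // x ∈ C i} → ℝ} (hμU : ∀ i, IsPmf (μU i))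
    (μB : (i j : Fin n) → ({x : ℝ // x ∈ C i} × {y : ℝ // y ∈ C j}) → ℝ) (ρ : ℝ) :
    FeasA E μU μB ρ ↔ FeasB E μU μB ρ := by
  constructor
  · rintro ⟨θ, θB, -, hU, hPmf, hProj, hVan, hKL⟩
    refine ⟨θB, hPmf, fun i j hij x => ?_, fun i j hij y => ?_, hVan, hKL⟩
    · rw [← hProj i j hij, sum_projBi_snd, hU]
    · rw [← hProj i j hij, sum_projBi_fst, hU]
  · rintro ⟨θB, hPmf, hrow, hcol, hVan, hKL⟩
    obtain ⟨θ, hθ, hU, hB⟩ := exists_joint_of_isCoupling hE μU hμU θB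
      fun i j hij => ⟨(hPmf i j hij).1, hrow i j hij, hcol i j hij⟩
    exact ⟨θ, θB, hθ, hU, hPmf, hB, hVan, hKL⟩

theorem stmt0_general
    (n : ℕ) (C : Fin n → Finset ℝ)
    (E : Finset (Fin n × Fin n)) (hE : IsTreeEdges E)
    (μU : (i : Fin n) → {x : ℝ // x ∈ C i} → ℝ) (hμU : ∀ i, IsPmf (μU i))
    (μB : (i j : Fin n) → ({x : ℝ // x ∈ C i} × {y : ℝ // y ∈ C j}) → ℝ) :
    (∀ ρ : ℝ, 0 ≤ ρ → (FeasA E μU μB ρ ↔ FeasB E μU μB ρ)) ∧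
    sInf {ρ : ℝ | 0 ≤ ρ ∧ FeasA E μU μB ρ} = sInf {ρ : ℝ | 0 ≤ ρ ∧ FeasB E μU μB ρ} := by
  have hiff := feasA_iff_feasB hE hμU μB
  exact ⟨fun ρ _ => hiff ρ, by simp_rw [hiff]⟩

/-- Theorem 2.1: on a tree, feasibility of the exponential-size problem (over0) is
equivalent to feasibility of the polynomial-size problem (over1) for every `ρ ≥ 0`;
consequently the two optimal values coincide. -/
theorem stmt0
    (n : ℕ) (hn : 1 ≤ n) (C : Fin n → Finset ℝ) (hC : ∀ i, (C i).Nonempty)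
    (E : Finset (Fin n × Fin n)) (hE : IsTreeEdges E)
    (μU : (i : Fin n) → {x : ℝ // x ∈ C i} → ℝ) (hμU : ∀ i, IsPmf (μU i))
    (μB : (i j : Fin n) → ({x : ℝ // x ∈ C i} × {y : ℝ // y ∈ C j}) → ℝ)
    (hμB : ∀ i j, (i, j) ∈ E → IsPmf (μB i j)) :
    (∀ ρ : ℝ, 0 ≤ ρ → (FeasA E μU μB ρ ↔ FeasB E μU μB ρ)) ∧
    sInf {ρ : ℝ | 0 ≤ ρ ∧ FeasA E μU μB ρ} = sInf {ρ : ℝ | 0 ≤ ρ ∧ FeasB E μU μB ρ} :=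
  stmt0_general n C E hE μU hμU μB
end
end

section
/- (Theorem 3.1) Given univariate pmfs μ_i on C i for each i ∈ Fin n, bivariate pmfs μ_{ij} on C i × C j for each (i,j) ∈ E, ρ ≥ 0, K ≥ 1, vectors a_k ∈ ℝ^n and scalars b_k ∈ ℝ for k ∈ Fin K, the optimal value of the convex program (cp0) equals the Fréchet bound; precisely: the supremum, over all families (v^k)_{k ∈ Fin K} of nonnegative functions v^k : (Π i, C i) → ℝ such that Σ_k v^k belongs to Θ_ρ, of the objective Σ_{k ∈ Fin K} Σ_c (Σ_i a_{k,i} * c i + b_k) * v^k(c), equals the supremum over θ ∈ Θ_ρ of E_θ[ψ]. -/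
open Finset

noncomputable section

/-- Theorem 3.1: the optimal value of the convex program (cp0) — rewritten by eliminating
the intermediate marginal variables, so that a feasible point is a family of nonnegative
functions `v^k` on the joint support whose sum is a distribution in `Θ_ρ` — equals the
Fréchet bound `sup_{θ ∈ Θ_ρ} E_θ[ψ]`. -/
theorem stmt1
    (n : ℕ) (hn : 1 ≤ n) (C : Fin n → Finset ℝ) (hC : ∀ i, (C i).Nonempty)
    (E : Finset (Fin n × Fin n)) (hE : ∀ e ∈ E, e.1 < e.2)
    (μU : (i : Fin n) → {x : ℝ // x ∈ C i} → ℝ) (hμU : ∀ i, IsPmf (μU i))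
    (μB : (i j : Fin n) → ({x : ℝ // x ∈ C i} × {y : ℝ // y ∈ C j}) → ℝ)
    (hμB : ∀ i j, (i, j) ∈ E → IsPmf (μB i j))
    (ρ : ℝ) (hρ : 0 ≤ ρ)
    (K : ℕ) (hK : 1 ≤ K) (a : Fin K → Fin n → ℝ) (b : Fin K → ℝ) :
    sSup {V : ℝ | ∃ v : Fin K → Pt C → ℝ,
        (∀ k c, 0 ≤ v k c) ∧
        InTheta E μU μB ρ (fun c => ∑ k, v k c) ∧
        V = ∑ k, ∑ c : Pt C, (∑ i, a k i * (c i : ℝ) + b k) * v k c} =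
    sSup {M : ℝ | ∃ θ : Pt C → ℝ, InTheta E μU μB ρ θ ∧
        M = ∑ c : Pt C, θ c * psi a b c} := by
  classical
  haveI nK : Nonempty (Fin K) := ⟨⟨0, hK⟩⟩
  haveI : ∀ i, Nonempty {x : ℝ // x ∈ C i} :=
    fun i => ⟨⟨(hC i).choose, (hC i).choose_spec⟩⟩
  set S1 := {V : ℝ | ∃ v : Fin K → Pt C → ℝ,
        (∀ k c, 0 ≤ v k c) ∧
        InTheta E μU μB ρ (fun c => ∑ k, v k c) ∧
        V = ∑ k, ∑ c : Pt C, (∑ i, a k i * (c i : ℝ) + b k) * v k c} with hS1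
  set S2 := {M : ℝ | ∃ θ : Pt C → ℝ, InTheta E μU μB ρ θ ∧
        M = ∑ c : Pt C, θ c * psi a b c} with hS2
  have hlin_le : ∀ (k : Fin K) (c : Pt C),
      (∑ i, a k i * (c i : ℝ) + b k) ≤ psi a b c := fun k c =>
    le_ciSup (f := fun k => ∑ i, a k i * (c i : ℝ) + b k)
      (Set.Finite.bddAbove (Set.finite_range _)) k
  have hex : ∀ c : Pt C, ∃ k, (∑ i, a k i * (c i : ℝ) + b k) = psi a b c :=
    fun c => exists_eq_ciSup_of_finite (f := fun k => ∑ i, a k i * (c i : ℝ) + b k)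
  set B := ⨆ c : Pt C, psi a b c with hBdef
  have hψB : ∀ c : Pt C, psi a b c ≤ B :=
    fun c => le_ciSup (f := fun c : Pt C => psi a b c) (Set.Finite.bddAbove (Set.finite_range _)) c
  -- S2 ⊆ S1
  have hsub : S2 ⊆ S1 := by
    rintro M ⟨θ, hθ, rfl⟩
    refine ⟨fun k c => if k = (hex c).choose then θ c else 0, ?_, ?_, ?_⟩
    · intro k c; dsimp only; split_ifs; exacts [hθ.1.1 c, le_rfl]
    · have heq : (fun c => ∑ k, if k = (hex c).choose then θ c else 0) = θ := by
        funext c; simp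
      rw [heq]; exact hθ
    · rw [Finset.sum_comm]
      refine Finset.sum_congr rfl fun c _ => ?_
      simp only [mul_ite, mul_zero, Finset.sum_ite_eq', Finset.mem_univ, if_true]
      rw [(hex c).choose_spec, mul_comm]
  -- every element of S1 is ≤ some element of S2
  have hle : ∀ V ∈ S1, ∃ M ∈ S2, V ≤ M := by
    rintro V ⟨v, hv, hθ, rfl⟩
    refine ⟨∑ c : Pt C, (∑ k, v k c) * psi a b c, ⟨_, hθ, rfl⟩, ?_⟩
    calc ∑ k, ∑ c : Pt C, (∑ i, a k i * (c i : ℝ) + b k) * v k c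
        ≤ ∑ k, ∑ c : Pt C, psi a b c * v k c :=
          Finset.sum_le_sum fun k _ => Finset.sum_le_sum fun c _ =>
            mul_le_mul_of_nonneg_right (hlin_le k c) (hv k c)
      _ = ∑ c : Pt C, (∑ k, v k c) * psi a b c := by
          rw [Finset.sum_comm]
          exact Finset.sum_congr rfl fun c _ => by rw [← Finset.mul_sum, mul_comm]
  -- B bounds S2
  have hB2 : ∀ M ∈ S2, M ≤ B := by
    rintro M ⟨θ, hθ, rfl⟩
    calc ∑ c : Pt C, θ c * psi a b c
        ≤ ∑ c : Pt C, θ c * B :=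
          Finset.sum_le_sum fun c _ =>
            mul_le_mul_of_nonneg_left (hψB c) (hθ.1.1 c)
      _ = B := by rw [← Finset.sum_mul, hθ.1.2, one_mul]
  have hB1 : ∀ V ∈ S1, V ≤ B := fun V hV => by
    obtain ⟨M, hM, hVM⟩ := hle V hV
    exact hVM.trans (hB2 M hM)
  by_cases h2 : S2.Nonempty
  · have h1 : S1.Nonempty := ⟨_, hsub h2.choose_spec⟩
    refine le_antisymm ?_ (csSup_le_csSup ⟨B, hB1⟩ h2 hsub)
    refine csSup_le h1 fun V hV => ?_
    obtain ⟨M, hM, hVM⟩ := hle V hV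
    exact hVM.trans (le_csSup ⟨B, hB2⟩ hM)
  · have h1 : ¬ S1.Nonempty := fun ⟨V, hV⟩ =>
      h2 (let ⟨M, hM, _⟩ := hle V hV; ⟨M, hM⟩)
    rw [Set.not_nonempty_iff_eq_empty] at h1 h2
    rw [h1, h2]
end
end

section
/- (Chow–Liu tree construction, key lemma in the proof of Theorem 2.1) Suppose the edge set E forms a tree on Fin n. Let μ_i be univariate pmfs on C i with μ_i(x) > 0 for every i ∈ Fin n and x ∈ C i, and let θ_{ij} be bivariate pmfs on C i × C j for (i,j) ∈ E satisfying Σ_{y ∈ C j} θ_{ij}(x,y) = μ_i(x) for all x ∈ C i and Σ_{x ∈ C i} θ_{ij}(x,y) = μ_j(y) for all y ∈ C j. Then the function θ defined on Π i, C i by θ(c) = (Π_{i ∈ Fin n} μ_i(c i)) * Π_{(i,j) ∈ E} θ_{ij}(c i, c j) / (μ_i(c i) * μ_j(c j)) is a joint distribution (nonnegative and summing to 1) satisfying proj_i θ = μ_i for every i ∈ Fin n and proj_{ij} θ = θ_{ij} for every (i,j) ∈ E. -/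
open Finset

noncomputable section

/-!
Sum out the forest one leaf at a time. If `v` is a leaf with unique edge `(a, b)`, the factor
`μ v (c v) * θB a b (c a, c b) / (μ a (c a) * μ b (c b))` sums over `c v` to `1`, because
`θB a b` has marginals `μ a` and `μ b`; so the edge can be deleted without changing the mass of
any cylinder event that leaves `v` free. A forest with an edge has two distinct leaves joined by a
path, hence a leaf outside any vertex set meeting each component at most once. Deleting every
edge leaves the product measure `∏ i, μ i`, whose cylinder masses are explicit. For the bivariate
marginal at an edge `(i, j)`, first pull out the factor of that edge: `i` and `j` lie in
different components of what remains.
-/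
theorem Fintype.sum_mul_eq_sum_mul_of_sum_update_eq {ι R : Type*} [Fintype ι] [DecidableEq ι]
    [NonUnitalNonAssocSemiring R] {β : ι → Type*} [∀ i, Fintype (β i)] (v : ι)
    {g h h' : (∀ i, β i) → R} (hg : ∀ c x, g (Function.update c v x) = g c)
    (hh : ∀ c, ∑ x, h (Function.update c v x) = ∑ x, h' (Function.update c v x)) :
    ∑ c, g c * h c = ∑ c, g c * h' c := by
  let e := Equiv.piSplitAt v β
  have hsplit : ∀ f : (∀ i, β i) → R, ∑ c, f c = ∑ d, ∑ x, f (e.symm (x, d)) := fun f => by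
    rw [← e.symm.sum_comp, Fintype.sum_prod_type_right]
  rw [hsplit, hsplit]
  refine Finset.sum_congr rfl fun d _ => ?_
  rcases isEmpty_or_nonempty (β v) with hv | ⟨⟨x₀⟩⟩
  · simp
  obtain ⟨c, hc⟩ : ∃ c, ∀ x, e.symm (x, d) = Function.update c v x := ⟨e.symm (x₀, d), fun x => by
    ext j
    by_cases hj : j = v
    · subst hj; simp [e]
    · simp [e, hj]⟩
  simp only [hc, hg, ← Finset.mul_sum, hh]

section Graph

open SimpleGraph

variable {V : Type*} [Finite V] {G : SimpleGraph V}

theorem SimpleGraph.IsAcyclic.exists_ne_reachable_leaves (hG : G.IsAcyclic) {a b : V}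
    (hab : G.Adj a b) :
    ∃ u v, u ≠ v ∧ G.Reachable u v ∧ (∃! w, G.Adj u w) ∧ ∃! w, G.Adj v w := by
  have : Nonempty V := ⟨a⟩
  obtain ⟨u, v, p, hp, hmax⟩ := Walk.exists_isPath_forall_isPath_length_le_length G
  have hnil : ¬p.Nil := fun h => by
    have := hmax a b (.cons hab .nil) (by simp [hab.ne])
    simp [h.length_eq_zero] at this
  refine ⟨u, v, hp.nil_iff_eq.not.mp hnil, p.reachable, ⟨_, p.adj_snd hnil, fun w hw => ?_⟩,
    ⟨_, (p.adj_penultimate hnil).symm, fun w hw => ?_⟩⟩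
  · apply hG.eq_snd_of_adj_start hp hw
    have : ¬(p.cons hw.symm).IsPath := fun h => by
      have := hmax _ _ _ h; simp at this
    grind [hp.cons]
  · apply hG.eq_penultimate_of_adj_end hp hw
    have : ¬(p.concat hw).IsPath := fun h => by
      have := hmax _ _ _ h; simp at this
    grind [hp.concat]

theorem SimpleGraph.IsAcyclic.exists_leaf_notMem (hG : G.IsAcyclic) {a b : V} (hab : G.Adj a b)
    {S : Set V} (hS : ∀ u ∈ S, ∀ v ∈ S, G.Reachable u v → u = v) :
    ∃ v ∉ S, ∃! w, G.Adj v w := by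
  obtain ⟨u, v, huv, hr, hu, hv⟩ := hG.exists_ne_reachable_leaves hab
  by_cases huS : u ∈ S
  · exact ⟨v, fun hvS => huv (hS u huS v hvS hr), hv⟩
  · exact ⟨u, huS, hu⟩

end Graph

section TreeGraph

open SimpleGraph

variable {n : ℕ}

@[simp]
theorem treeGraph_adj {F : Finset (Fin n × Fin n)} {a b : Fin n} :
    (treeGraph F).Adj a b ↔ a ≠ b ∧ ((a, b) ∈ F ∨ (b, a) ∈ F) := by
  simp [treeGraph]

theorem treeGraph_mono {F F' : Finset (Fin n × Fin n)} (h : F ⊆ F') :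
    treeGraph F ≤ treeGraph F' := fun a b hab => by
  simp only [treeGraph_adj] at hab ⊢
  exact ⟨hab.1, hab.2.imp (@h _) (@h _)⟩

theorem exists_leaf_edge_notMem {F : Finset (Fin n × Fin n)} (hs : ∀ e ∈ F, e.1 < e.2)
    (hac : (treeGraph F).IsAcyclic) (hne : F.Nonempty) {S : Set (Fin n)}
    (hS : ∀ u ∈ S, ∀ v ∈ S, (treeGraph F).Reachable u v → u = v) :
    ∃ v ∉ S, ∃ e₀ ∈ F, ∀ e ∈ F, (e.1 = v ∨ e.2 = v) ↔ e = e₀ := by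
  obtain ⟨f, hf⟩ := hne
  obtain ⟨v, hvS, w, hvw, hw⟩ :=
    hac.exists_leaf_notMem (treeGraph_adj.2 ⟨(hs f hf).ne, Or.inl hf⟩) hS
  have hinc : ∀ e ∈ F, (e.1 = v ∨ e.2 = v) ↔ (e = (v, w) ∨ e = (w, v)) := by
    rintro ⟨a, b⟩ he
    constructor
    · rintro (rfl | rfl)
      · exact Or.inl (by rw [hw b (treeGraph_adj.2 ⟨(hs _ he).ne, Or.inl he⟩)])
      · exact Or.inr (by rw [hw a (treeGraph_adj.2 ⟨(hs _ he).ne', Or.inr he⟩)])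
    · rintro (h | h) <;> simp_all
  refine ⟨v, hvS, ?_⟩
  rcases (treeGraph_adj.1 hvw).2 with h | h
  · refine ⟨_, h, fun e he => (hinc e he).trans ⟨?_, Or.inl⟩⟩
    rintro (rfl | rfl)
    · rfl
    · exact ((hs _ h).asymm (hs _ he)).elim
  · refine ⟨_, h, fun e he => (hinc e he).trans ⟨?_, Or.inr⟩⟩
    rintro (rfl | rfl)
    · exact ((hs _ h).asymm (hs _ he)).elim
    · rfl

theorem not_reachable_treeGraph_erase {E : Finset (Fin n × Fin n)} (hs : ∀ e ∈ E, e.1 < e.2)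
    (hac : (treeGraph E).IsAcyclic) {i j : Fin n} (hij : (i, j) ∈ E) :
    ¬(treeGraph (E.erase (i, j))).Reachable i j := by
  have hbridge := isAcyclic_iff_forall_adj_isBridge.1 hac
    (treeGraph_adj.2 ⟨(hs _ hij).ne, Or.inl hij⟩)
  refine fun h => isBridge_iff.1 hbridge (h.mono fun a b hab => ?_)
  have := hs _ hij
  simp only [treeGraph_adj, Finset.mem_erase] at hab
  simp only [deleteEdges_adj, treeGraph_adj, Set.mem_singleton_iff, Sym2.eq_iff]
  grind

end TreeGraph

section TreeProduct

variable {n : ℕ} {C : Fin n → Finset ℝ} (μ : (i : Fin n) → {x : ℝ // x ∈ C i} → ℝ)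
  (θB : (i j : Fin n) → ({x : ℝ // x ∈ C i} × {y : ℝ // y ∈ C j}) → ℝ)

def HasMarginals (a b : Fin n) : Prop :=
  (∀ x, ∑ y, θB a b (x, y) = μ a x) ∧ ∀ y, ∑ x, θB a b (x, y) = μ b y

def edgeRatio (e : Fin n × Fin n) (c : Pt C) : ℝ :=
  θB e.1 e.2 (c e.1, c e.2) / (μ e.1 (c e.1) * μ e.2 (c e.2))

def treeProduct (F : Finset (Fin n × Fin n)) (c : Pt C) : ℝ :=
  (∏ i, μ i (c i)) * ∏ e ∈ F, edgeRatio μ θB e c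

def cylinderIndicator (S : Finset (Fin n)) (z c : Pt C) : ℝ :=
  if ∀ k ∈ S, c k = z k then 1 else 0

variable {μ θB}

theorem sum_cylinderIndicator_mul_prod (hμ : ∀ i, ∑ x, μ i x = 1) (S : Finset (Fin n))
    (z : Pt C) : ∑ c, cylinderIndicator S z c * ∏ i, μ i (c i) = ∏ i ∈ S, μ i (z i) := by
  let f : (i : Fin n) → {x : ℝ // x ∈ C i} → ℝ := fun i x => if i ∉ S ∨ x = z i then μ i x else 0
  have hf : ∀ c : Pt C, cylinderIndicator S z c * ∏ i, μ i (c i) = ∏ i, f i (c i) := fun c => by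
    simp only [f, cylinderIndicator, Fintype.prod_ite_zero, ite_mul, one_mul, zero_mul]
    congr 1
    simp only [or_iff_not_imp_left, not_not]
  have hsum : ∀ i, ∑ x, f i x = if i ∈ S then μ i (z i) else 1 := fun i => by
    by_cases hi : i ∈ S
    · simp only [f, hi, not_true_eq_false, false_or, if_true, Finset.sum_ite_eq', Finset.mem_univ]
    · simp only [f, hi, not_false_eq_true, true_or, if_true, if_false, hμ]
  rw [Finset.sum_congr rfl fun c _ => hf c, ← Fintype.prod_sum,
    Finset.prod_congr rfl fun i _ => hsum i, Finset.prod_ite_mem, Finset.univ_inter]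

theorem sum_mul_edgeRatio_update (hpos : ∀ i x, 0 < μ i x) {a b v : Fin n} (hab : a ≠ b)
    (hmarg : HasMarginals μ θB a b) (hv : a = v ∨ b = v) (c : Pt C) :
    ∑ x, μ v x * edgeRatio μ θB (a, b) (Function.update c v x) = 1 := by
  rcases hv with rfl | rfl
  · have hx : ∀ x, μ a x * edgeRatio μ θB (a, b) (Function.update c a x)
        = θB a b (x, c b) / μ b (c b) := fun x => by
      simp only [edgeRatio, Function.update_self, Function.update_of_ne hab.symm]
      field_simp [(hpos a x).ne']
    simp only [hx, ← Finset.sum_div, hmarg.2, div_self (hpos b (c b)).ne']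
  · have hx : ∀ x, μ b x * edgeRatio μ θB (a, b) (Function.update c b x)
        = θB a b (c a, x) / μ a (c a) := fun x => by
      simp only [edgeRatio, Function.update_self, Function.update_of_ne hab]
      field_simp [(hpos b x).ne']
    simp only [hx, ← Finset.sum_div, hmarg.1, div_self (hpos a (c a)).ne']

theorem sum_mul_treeProduct_erase_leaf (hμ : ∀ i, ∑ x, μ i x = 1) (hpos : ∀ i x, 0 < μ i x)
    {F : Finset (Fin n × Fin n)} {a b v : Fin n} (hab : a ≠ b) (hmarg : HasMarginals μ θB a b)
    (h₀ : (a, b) ∈ F) (hleaf : ∀ e ∈ F, (e.1 = v ∨ e.2 = v) ↔ e = (a, b))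
    {A : Pt C → ℝ} (hA : ∀ c x, A (Function.update c v x) = A c) :
    ∑ c, A c * treeProduct μ θB F c = ∑ c, A c * treeProduct μ θB (F.erase (a, b)) c := by
  let rest : Pt C → ℝ := fun c =>
    A c * ((∏ i ∈ Finset.univ.erase v, μ i (c i)) * ∏ e ∈ F.erase (a, b), edgeRatio μ θB e c)
  have hoff : ∀ e ∈ F.erase (a, b), e.1 ≠ v ∧ e.2 ≠ v := fun e he => by
    have := (hleaf e (Finset.mem_of_mem_erase he)).not.2 (Finset.ne_of_mem_erase he)
    tauto
  have hrest : ∀ c x, rest (Function.update c v x) = rest c := fun c x => by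
    simp only [rest, hA]
    congr 2
    · exact Finset.prod_congr rfl fun i hi => by
        rw [Function.update_of_ne (Finset.ne_of_mem_erase hi)]
    · exact Finset.prod_congr rfl fun e he => by
        simp only [edgeRatio, Function.update_of_ne (hoff e he).1,
          Function.update_of_ne (hoff e he).2]
  have hF : ∀ c, A c * treeProduct μ θB F c
      = rest c * (μ v (c v) * edgeRatio μ θB (a, b) c) := fun c => by
    rw [treeProduct, ← Finset.mul_prod_erase _ _ (Finset.mem_univ v),
      ← Finset.mul_prod_erase _ _ h₀]
    ring
  have hF' : ∀ c, A c * treeProduct μ θB (F.erase (a, b)) c = rest c * μ v (c v) := fun c => by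
    rw [treeProduct, ← Finset.mul_prod_erase _ _ (Finset.mem_univ v)]
    ring
  simp only [hF, hF']
  refine Fintype.sum_mul_eq_sum_mul_of_sum_update_eq v hrest fun c => ?_
  simp only [Function.update_self, hμ,
    sum_mul_edgeRatio_update hpos hab hmarg ((hleaf (a, b) h₀).2 rfl)]

theorem sum_cylinderIndicator_mul_treeProduct (hμ : ∀ i, ∑ x, μ i x = 1)
    (hpos : ∀ i x, 0 < μ i x) {F : Finset (Fin n × Fin n)} (hs : ∀ e ∈ F, e.1 < e.2)
    (hmarg : ∀ a b, (a, b) ∈ F → HasMarginals μ θB a b) (hac : (treeGraph F).IsAcyclic)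
    {S : Finset (Fin n)} (hS : ∀ u ∈ S, ∀ v ∈ S, (treeGraph F).Reachable u v → u = v)
    (z : Pt C) :
    ∑ c, cylinderIndicator S z c * treeProduct μ θB F c = ∏ i ∈ S, μ i (z i) := by
  induction F using Finset.strongInduction with
  | H F ih =>
  rcases F.eq_empty_or_nonempty with rfl | hne
  · simpa [treeProduct] using sum_cylinderIndicator_mul_prod hμ S z
  obtain ⟨v, hvS, ⟨a, b⟩, h₀, hleaf⟩ := exists_leaf_edge_notMem hs hac hne hS
  have hsub := F.erase_subset (a, b)
  have hmono := treeGraph_mono hsub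
  rw [sum_mul_treeProduct_erase_leaf hμ hpos (hs _ h₀).ne (hmarg a b h₀) h₀ hleaf fun c x => ?_]
  · exact ih _ (Finset.erase_ssubset h₀) (fun e he => hs e (hsub he))
      (fun a b h => hmarg a b (hsub h)) (hac.anti hmono)
      (fun u hu w hw h => hS u hu w hw (h.mono hmono))
  · simp only [cylinderIndicator]
    congr 1
    exact propext (forall₂_congr fun k hk => by
      rw [Function.update_of_ne (ne_of_mem_of_not_mem hk hvS)])

end TreeProduct

section Marginals

variable {n : ℕ} {C : Fin n → Finset ℝ} [Nonempty (Pt C)]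
  {μ : (i : Fin n) → {x : ℝ // x ∈ C i} → ℝ}
  {θB : (i j : Fin n) → ({x : ℝ // x ∈ C i} × {y : ℝ // y ∈ C j}) → ℝ}
  {F : Finset (Fin n × Fin n)}

theorem sum_treeProduct (hμ : ∀ i, ∑ x, μ i x = 1) (hpos : ∀ i x, 0 < μ i x)
    (hs : ∀ e ∈ F, e.1 < e.2) (hmarg : ∀ a b, (a, b) ∈ F → HasMarginals μ θB a b)
    (hac : (treeGraph F).IsAcyclic) : ∑ c, treeProduct μ θB F c = 1 := by
  simpa [cylinderIndicator] using sum_cylinderIndicator_mul_treeProduct hμ hpos hs hmarg hac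
    (S := ∅) (by simp) (Classical.arbitrary _)

theorem projUni_treeProduct (hμ : ∀ i, ∑ x, μ i x = 1) (hpos : ∀ i x, 0 < μ i x)
    (hs : ∀ e ∈ F, e.1 < e.2) (hmarg : ∀ a b, (a, b) ∈ F → HasMarginals μ θB a b)
    (hac : (treeGraph F).IsAcyclic) (i : Fin n) : projUni (treeProduct μ θB F) i = μ i := by
  funext x
  simpa [cylinderIndicator, projUni] using sum_cylinderIndicator_mul_treeProduct hμ hpos hs
    hmarg hac (S := {i}) (by simp) (Function.update (Classical.arbitrary _) i x)

theorem projBi_treeProduct (hμ : ∀ i, ∑ x, μ i x = 1) (hpos : ∀ i x, 0 < μ i x)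
    (hs : ∀ e ∈ F, e.1 < e.2) (hmarg : ∀ a b, (a, b) ∈ F → HasMarginals μ θB a b)
    (hac : (treeGraph F).IsAcyclic) {i j : Fin n} (hij : (i, j) ∈ F) :
    projBi (treeProduct μ θB F) i j = θB i j := by
  funext ⟨x, y⟩
  have hne : i ≠ j := (hs _ hij).ne
  have hsub := F.erase_subset (i, j)
  have hunreach := not_reachable_treeGraph_erase hs hac hij
  let z : Pt C := Function.update (Function.update (Classical.arbitrary _) i x) j y
  have hz : ∀ c : Pt C, (∀ k ∈ ({i, j} : Finset (Fin n)), c k = z k) ↔ c i = x ∧ c j = y := by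
    simp [z, hne]
  have hS : ∀ u ∈ ({i, j} : Finset (Fin n)), ∀ w ∈ ({i, j} : Finset (Fin n)),
      (treeGraph (F.erase (i, j))).Reachable u w → u = w := by
    simp only [Finset.mem_insert, Finset.mem_singleton]
    rintro u (hu | hu) w (hw | hw) h <;> subst u w
    exacts [rfl, (hunreach h).elim, (hunreach h.symm).elim, rfl]
  have hsum := sum_cylinderIndicator_mul_treeProduct hμ hpos (fun e he => hs e (hsub he))
    (fun a b h => hmarg a b (hsub h)) (hac.anti (treeGraph_mono hsub)) hS z
  have hterm : ∀ c, (if c i = x ∧ c j = y then treeProduct μ θB F c else 0)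
      = θB i j (x, y) / (μ i x * μ j y) *
        (cylinderIndicator {i, j} z c * treeProduct μ θB (F.erase (i, j)) c) := fun c => by
    rw [cylinderIndicator, if_congr (hz c) rfl rfl]
    split_ifs with h
    · rw [treeProduct, treeProduct, ← Finset.mul_prod_erase _ _ hij, edgeRatio, h.1, h.2]
      ring
    · simp
  simp only [projBi, hterm, ← Finset.mul_sum, hsum, Finset.prod_pair hne, z,
    Function.update_self, Function.update_of_ne hne]
  exact div_mul_cancel₀ _ (mul_pos (hpos i x) (hpos j y)).ne'

end Marginals

theorem stmt3_general
    (n : ℕ) (C : Fin n → Finset ℝ) (hC : ∀ i, (C i).Nonempty)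
    (E : Finset (Fin n × Fin n)) (hE : IsTreeEdges E)
    (μU : (i : Fin n) → {x : ℝ // x ∈ C i} → ℝ) (hμU : ∀ i, IsPmf (μU i))
    (hpos : ∀ i, ∀ x, 0 < μU i x)
    (θB : (i j : Fin n) → ({x : ℝ // x ∈ C i} × {y : ℝ // y ∈ C j}) → ℝ)
    (hθB : ∀ i j, (i, j) ∈ E → IsPmf (θB i j))
    (hcons1 : ∀ i j, (i, j) ∈ E → ∀ x : {x : ℝ // x ∈ C i},
      ∑ y : {y : ℝ // y ∈ C j}, θB i j (x, y) = μU i x)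
    (hcons2 : ∀ i j, (i, j) ∈ E → ∀ y : {y : ℝ // y ∈ C j},
      ∑ x : {x : ℝ // x ∈ C i}, θB i j (x, y) = μU j y)
    (θ : Pt C → ℝ)
    (hθ : ∀ c : Pt C, θ c = (∏ i, μU i (c i)) *
      ∏ e ∈ E, θB e.1 e.2 (c e.1, c e.2) / (μU e.1 (c e.1) * μU e.2 (c e.2))) :
    IsJoint θ ∧ (∀ i, projUni θ i = μU i) ∧
    (∀ i j, (i, j) ∈ E → projBi θ i j = θB i j) := by
  have : Nonempty (Pt C) := ⟨fun i => ⟨_, (hC i).choose_spec⟩⟩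
  obtain rfl : θ = treeProduct μU θB E := funext hθ
  have hμ : ∀ i, ∑ x, μU i x = 1 := fun i => (hμU i).2
  have hmarg : ∀ a b, (a, b) ∈ E → HasMarginals μU θB a b :=
    fun a b h => ⟨hcons1 a b h, hcons2 a b h⟩
  have hac := hE.2.isAcyclic
  have hnonneg : ∀ c, 0 ≤ treeProduct μU θB E c := fun c =>
    mul_nonneg (Finset.prod_nonneg fun i _ => (hpos i _).le) (Finset.prod_nonneg fun e he =>
      div_nonneg ((hθB e.1 e.2 he).1 _) (mul_pos (hpos _ _) (hpos _ _)).le)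
  exact ⟨⟨hnonneg, sum_treeProduct hμ hpos hE.1 hmarg hac⟩,
    projUni_treeProduct hμ hpos hE.1 hmarg hac,
    fun i j hij => projBi_treeProduct hμ hpos hE.1 hmarg hac hij⟩

/-- Chow–Liu tree construction: on a tree, given strictly positive univariate pmfs and
consistent bivariate pmfs on the edges, the conditionally independent tree product
distribution is a joint distribution with the prescribed univariate and bivariate
marginals. -/
theorem stmt3
    (n : ℕ) (hn : 1 ≤ n) (C : Fin n → Finset ℝ) (hC : ∀ i, (C i).Nonempty)
    (E : Finset (Fin n × Fin n)) (hE : IsTreeEdges E)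
    (μU : (i : Fin n) → {x : ℝ // x ∈ C i} → ℝ) (hμU : ∀ i, IsPmf (μU i))
    (hpos : ∀ i, ∀ x, 0 < μU i x)
    (θB : (i j : Fin n) → ({x : ℝ // x ∈ C i} × {y : ℝ // y ∈ C j}) → ℝ)
    (hθB : ∀ i j, (i, j) ∈ E → IsPmf (θB i j))
    (hcons1 : ∀ i j, (i, j) ∈ E → ∀ x : {x : ℝ // x ∈ C i},
      ∑ y : {y : ℝ // y ∈ C j}, θB i j (x, y) = μU i x)
    (hcons2 : ∀ i j, (i, j) ∈ E → ∀ y : {y : ℝ // y ∈ C j},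
      ∑ x : {x : ℝ // x ∈ C i}, θB i j (x, y) = μU j y)
    (θ : Pt C → ℝ)
    (hθ : ∀ c : Pt C, θ c = (∏ i, μU i (c i)) *
      ∏ e ∈ E, θB e.1 e.2 (c e.1, c e.2) / (μU e.1 (c e.1) * μU e.2 (c e.2))) :
    IsJoint θ ∧ (∀ i, projUni θ i = μU i) ∧
    (∀ i j, (i, j) ∈ E → projBi θ i j = θB i j) :=
  stmt3_general n C hC E hE μU hμU hpos θB hθB hcons1 hcons2 θ hθ
end
end

section
/- (Nonemptiness of the Fréchet class on a tree) Suppose the edge set E forms a tree on Fin n. Let μ_i be univariate pmfs on C i for i ∈ Fin n and let θ_{ij} be bivariate pmfs on C i × C j for (i,j) ∈ E satisfying the consistency conditions Σ_{y ∈ C j} θ_{ij}(x,y) = μ_i(x) for all x ∈ C i and Σ_{x ∈ C i} θ_{ij}(x,y) = μ_j(y) for all y ∈ C j. Then there exists a joint distribution θ on Π i, C i with proj_i θ = μ_i for every i ∈ Fin n and proj_{ij} θ = θ_{ij} for every (i,j) ∈ E. -/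
open Finset

noncomputable section

lemma my_exists_leaf {V : Type} [Fintype V] [DecidableEq V] (G : SimpleGraph V)
    [DecidableRel G.Adj] (hG : G.IsTree) (h2 : 2 ≤ Fintype.card V) :
    ∃ v, G.degree v = 1 := by
  by_contra hcon
  push_neg at hcon
  have hdeg : ∀ v, 2 ≤ G.degree v := by
    intro v
    have h1 : 0 < G.degree v := by
      rw [G.degree_pos_iff_exists_adj]
      obtain ⟨w, hw⟩ := Fintype.exists_ne_of_one_lt_card h2 v
      obtain ⟨p⟩ := hG.isConnected.preconnected v w
      cases p with
      | nil => exact absurd rfl hw.symm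
      | cons h q => exact ⟨_, h⟩
    have := hcon v
    omega
  have hsum := G.sum_degrees_eq_twice_card_edges
  have hcard := hG.card_edgeFinset
  have hle : Fintype.card V * 2 ≤ ∑ v, G.degree v :=
    Finset.card_nsmul_le_sum univ _ 2 (fun v _ => hdeg v)
  omega

lemma tree_aux (m : ℕ) : ∀ (V : Type) [Fintype V] [DecidableEq V],
    Fintype.card V = m → ∀ (C : V → Finset ℝ)
    (E : Finset (V × V)), (∀ e ∈ E, (e.2, e.1) ∉ E) →
    (SimpleGraph.fromRel fun i j => (i, j) ∈ E).IsTree →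
    ∀ (μU : (i : V) → {x : ℝ // x ∈ C i} → ℝ),
    (∀ i, (∀ s, 0 ≤ μU i s) ∧ ∑ s, μU i s = 1) →
    ∀ (θB : (i j : V) → ({x : ℝ // x ∈ C i} × {y : ℝ // y ∈ C j}) → ℝ),
    (∀ i j, (i, j) ∈ E → ∀ s, 0 ≤ θB i j s) →
    (∀ i j, (i, j) ∈ E → ∀ x, ∑ y, θB i j (x, y) = μU i x) →
    (∀ i j, (i, j) ∈ E → ∀ y, ∑ x, θB i j (x, y) = μU j y) →
    ∃ θ : ((i : V) → {x : ℝ // x ∈ C i}) → ℝ,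
      (∀ c, 0 ≤ θ c) ∧ (∑ c, θ c = 1) ∧
      (∀ i x, (∑ c, if c i = x then θ c else 0) = μU i x) ∧
      (∀ i j, (i, j) ∈ E → ∀ x y,
        (∑ c, if c i = x ∧ c j = y then θ c else 0) = θB i j (x, y)) := by
  induction m with
  | zero =>
    intro V _ _ hcard C E hanti htree μU hμU θB hθB hc1 hc2
    have := htree.isConnected.nonempty
    rw [← Fintype.card_pos_iff] at this
    omega
  | succ m ih =>
    intro V _ _ hcard C E hanti htree μU hμU θB hθB hc1 hc2
    rcases Nat.eq_zero_or_pos m with hm | hm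
    · -- base case : one vertex, no edges
      subst hm
      obtain ⟨v₀, hv₀⟩ := Fintype.card_eq_one_iff.mp hcard
      haveI : Unique V := ⟨⟨v₀⟩, hv₀⟩
      refine ⟨fun c => μU default (c default), fun c => (hμU default).1 _, ?_, ?_, ?_⟩
      · rw [← (hμU default).2]
        exact Fintype.sum_equiv (Equiv.piUnique (fun i => {x : ℝ // x ∈ C i})) _ _
          (fun c => rfl)
      · intro i x
        have h1 := Unique.eq_default i; subst h1
        have := Fintype.sum_equiv (Equiv.piUnique (fun i => {x : ℝ // x ∈ C i}))
          (fun c => if c default = x then μU default (c default) else 0)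
          (fun y => if y = x then μU default y else 0) (fun c => rfl)
        rw [this, Finset.sum_ite_eq' Finset.univ x (fun s => μU default s)]
        simp
      · intro i j hij
        exfalso
        have h1 := Unique.eq_default i; subst h1
        have h2 := Unique.eq_default j; subst h2
        exact hanti _ hij hij
    · -- inductive step
      set G := SimpleGraph.fromRel (fun i j : V => (i, j) ∈ E) with hGdef
      haveI : DecidableRel G.Adj := fun a b =>
        decidable_of_iff _ (SimpleGraph.fromRel_adj _ a b).symm
      obtain ⟨v, hv⟩ := my_exists_leaf G htree (by omega)
      obtain ⟨u, hu⟩ : ∃ u, G.neighborFinset v = {u} := Finset.card_eq_one.mp hv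
      have hadj_vu : G.Adj v u := by
        rw [← SimpleGraph.mem_neighborFinset, hu]; exact Finset.mem_singleton_self u
      have huniq : ∀ w, G.Adj v w → w = u := by
        intro w h
        have : w ∈ G.neighborFinset v := (SimpleGraph.mem_neighborFinset _ _ _).mpr h
        rw [hu] at this; simpa using this
      have huv_ne : u ≠ v := (G.ne_of_adj hadj_vu).symm
      have hNE : ∀ i j, (i, j) ∈ E → i ≠ j := by
        rintro i j h rfl; exact hanti _ h h
      have hIv1 : ∀ j, (v, j) ∈ E → j = u := fun j h =>
        huniq j ((SimpleGraph.fromRel_adj _ v j).mpr ⟨hNE v j h, Or.inl h⟩)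
      have hIv2 : ∀ i, (i, v) ∈ E → i = u := fun i h =>
        huniq i ((SimpleGraph.fromRel_adj _ v i).mpr ⟨(hNE i v h).symm, Or.inr h⟩)
      have hEor : (v, u) ∈ E ∨ (u, v) ∈ E := by
        have := hadj_vu; rw [SimpleGraph.fromRel_adj] at this; tauto
      obtain ⟨κ, hκ0, hκ1, hκ2, hκ3⟩ :
          ∃ κ : {x : ℝ // x ∈ C u} → {y : ℝ // y ∈ C v} → ℝ,
            (∀ x y, 0 ≤ κ x y) ∧ (∀ x, ∑ y, κ x y = μU u x) ∧
            (∀ y, ∑ x, κ x y = μU v y) ∧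
            (∀ x y, ((u, v) ∈ E → θB u v (x, y) = κ x y) ∧
              ((v, u) ∈ E → θB v u (y, x) = κ x y)) := by
        rcases hEor with h | h
        · exact ⟨fun x y => θB v u (y, x), fun x y => hθB v u h _,
            fun x => hc2 v u h x, fun y => hc1 v u h y,
            fun x y => ⟨fun h' => absurd h (hanti _ h'), fun _ => rfl⟩⟩
        · exact ⟨fun x y => θB u v (x, y), fun x y => hθB u v h _,
            fun x => hc1 u v h x, fun y => hc2 u v h y,
            fun x y => ⟨fun _ => rfl, fun h' => absurd h (hanti _ h')⟩⟩
      set cond : {x : ℝ // x ∈ C u} → {y : ℝ // y ∈ C v} → ℝ :=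
        fun x y => if μU u x = 0 then 0 else κ x y / μU u x with hconddef
      have c0 : ∀ x y, 0 ≤ cond x y := by
        intro x y; rw [hconddef]; dsimp only
        split
        · exact le_refl 0
        · exact div_nonneg (hκ0 x y) ((hμU u).1 x)
      have c2 : ∀ x y, μU u x * cond x y = κ x y := by
        intro x y; rw [hconddef]; dsimp only
        by_cases h : μU u x = 0
        · rw [if_pos h, h, zero_mul]
          have hle : κ x y ≤ ∑ y', κ x y' :=
            Finset.single_le_sum (fun z _ => hκ0 x z) (Finset.mem_univ y)
          rw [hκ1 x, h] at hle
          exact (le_antisymm hle (hκ0 x y)).symm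
        · rw [if_neg h]; field_simp
      have c1 : ∀ x, μU u x ≠ 0 → ∑ y, cond x y = 1 := by
        intro x h
        rw [hconddef]; dsimp only
        simp only [if_neg h]
        rw [← Finset.sum_div, hκ1, div_self h]
      -- the reduced system on V' = V \ {v}
      set E' : Finset ({w : V // w ≠ v} × {w : V // w ≠ v}) :=
        Finset.univ.filter (fun e => (e.1.1, e.2.1) ∈ E) with hE'def
      have hE'mem : ∀ a b : {w : V // w ≠ v}, ((a, b) ∈ E' ↔ (a.1, b.1) ∈ E) := by
        intro a b; rw [hE'def]; simp
      set G' : SimpleGraph {w : V // w ≠ v} :=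
        SimpleGraph.fromRel (fun i j => (i, j) ∈ E') with hG'def
      have hG'adj : ∀ a b : {w : V // w ≠ v}, (G'.Adj a b ↔ G.Adj a.1 b.1) := by
        intro a b
        rw [hG'def, hGdef, SimpleGraph.fromRel_adj, SimpleGraph.fromRel_adj,
          hE'mem, hE'mem, Ne, Ne, Subtype.ext_iff]
      have hcard' : Fintype.card {w : V // w ≠ v} = m := by
        have h1 : Fintype.card {w : V // ¬ w = v} = Fintype.card V - Fintype.card {w : V // w = v} :=
          Fintype.card_subtype_compl _
        rw [Fintype.card_subtype_eq, hcard] at h1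
        simpa using h1
      have htree' : G'.IsTree := by
        constructor
        · haveI : Nonempty {w : V // w ≠ v} := ⟨⟨u, huv_ne⟩⟩
          constructor
          intro a b
          have key : ∀ (N : ℕ) (x y : V) (hx : x ≠ v) (hy : y ≠ v) (p : G.Walk x y),
              p.length ≤ N → G'.Reachable ⟨x, hx⟩ ⟨y, hy⟩ := by
            intro N
            induction N with
            | zero =>
              intro x y hx hy p hp
              cases p with
              | nil => exact SimpleGraph.Reachable.refl _
              | cons h q => simp at hp
            | succ N ihN =>
              intro x y hx hy p hp
              cases p with
              | nil => exact SimpleGraph.Reachable.refl _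
              | @cons _ w _ h q =>
                by_cases hw : w = v
                · cases q with
                  | nil => exact absurd hw hy
                  | @cons _ w2 _ h2 q2 =>
                    have hxu : x = u := huniq x (hw ▸ h).symm
                    have hw2 : w2 = u := huniq w2 (hw ▸ h2)
                    have hw2v : w2 ≠ v := hw2 ▸ huv_ne
                    have hr : G'.Reachable ⟨w2, hw2v⟩ ⟨y, hy⟩ :=
                      ihN w2 y hw2v hy q2 (by simp at hp; omega)
                    have hxw2 : (⟨x, hx⟩ : {w : V // w ≠ v}) = ⟨w2, hw2v⟩ :=
                      Subtype.ext (hxu.trans hw2.symm)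
                    rwa [hxw2]
                · have hadj' : G'.Adj ⟨x, hx⟩ ⟨w, hw⟩ := (hG'adj _ _).mpr h
                  exact hadj'.reachable.trans (ihN w y hw hy q (by simp at hp; omega))
          obtain ⟨p⟩ := htree.isConnected.preconnected a.1 b.1
          exact key p.length a.1 b.1 a.2 b.2 p le_rfl
        · intro a w hw
          have hmap : (w.map ⟨Subtype.val, fun {x y} h => (hG'adj x y).mp h⟩).IsCycle :=
            hw.map Subtype.val_injective
          exact htree.IsAcyclic _ hmap
      obtain ⟨θ', hθ'0, hθ'1, hθ'U, hθ'B⟩ :=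
        ih {w : V // w ≠ v} hcard' (fun j => C j.1) E'
          (by
            rintro ⟨a, b⟩ hab hba
            exact hanti _ ((hE'mem a b).mp hab) ((hE'mem b a).mp hba))
          htree'
          (fun i => μU i.1) (fun i => hμU i.1)
          (fun i j => θB i.1 j.1)
          (fun i j h => hθB i.1 j.1 ((hE'mem i j).mp h))
          (fun i j h => hc1 i.1 j.1 ((hE'mem i j).mp h))
          (fun i j h => hc2 i.1 j.1 ((hE'mem i j).mp h))
      -- assemble the joint distribution
      set Φ := Equiv.piSplitAt v (fun i => {x : ℝ // x ∈ C i}) with hΦdef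
      set θ : ((i : V) → {x : ℝ // x ∈ C i}) → ℝ :=
        fun c => θ' (fun j => c j.1) * cond (c u) (c v) with hθdef
      have hevv : ∀ (y : {x : ℝ // x ∈ C v}) (c' : (j : {w : V // w ≠ v}) → {x : ℝ // x ∈ C j.1}),
          Φ.symm (y, c') v = y := by intro y c'; simp [hΦdef]
      have hevne : ∀ (y : {x : ℝ // x ∈ C v}) (c' : (j : {w : V // w ≠ v}) → {x : ℝ // x ∈ C j.1})
          (i : V) (h : i ≠ v), Φ.symm (y, c') i = c' ⟨i, h⟩ := by
        intro y c' i h; simp [hΦdef, h]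
      have hrestr : ∀ (y : {x : ℝ // x ∈ C v}) (c' : (j : {w : V // w ≠ v}) → {x : ℝ // x ∈ C j.1}),
          (fun j : {w : V // w ≠ v} => Φ.symm (y, c') j.1) = c' := by
        intro y c'; funext j; exact hevne y c' j.1 j.2
      have hθeval : ∀ (y : {x : ℝ // x ∈ C v}) (c' : (j : {w : V // w ≠ v}) → {x : ℝ // x ∈ C j.1}),
          θ (Φ.symm (y, c')) = θ' c' * cond (c' ⟨u, huv_ne⟩) y := by
        intro y c'
        rw [hθdef]; dsimp only
        rw [hrestr, hevne y c' u huv_ne, hevv]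
      have hsplit : ∀ f : ((i : V) → {x : ℝ // x ∈ C i}) → ℝ,
          ∑ c, f c = ∑ c' : (j : {w : V // w ≠ v}) → {x : ℝ // x ∈ C j.1},
            ∑ y : {x : ℝ // x ∈ C v}, f (Φ.symm (y, c')) := by
        intro f
        rw [← Equiv.sum_comp Φ.symm f, Fintype.sum_prod_type, Finset.sum_comm]
      have h0 : ∀ c' : (j : {w : V // w ≠ v}) → {x : ℝ // x ∈ C j.1},
          θ' c' ≤ μU u (c' ⟨u, huv_ne⟩) := by
        intro c'
        have hs := Finset.single_le_sum
          (f := fun d : (j : {w : V // w ≠ v}) → {x : ℝ // x ∈ C j.1} =>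
            if d ⟨u, huv_ne⟩ = c' ⟨u, huv_ne⟩ then θ' d else 0)
          (fun d _ => by by_cases h : d ⟨u, huv_ne⟩ = c' ⟨u, huv_ne⟩ <;> simp [h, hθ'0 d])
          (Finset.mem_univ c')
        rw [hθ'U ⟨u, huv_ne⟩ (c' ⟨u, huv_ne⟩)] at hs
        simpa using hs
      have h1 : ∀ c' : (j : {w : V // w ≠ v}) → {x : ℝ // x ∈ C j.1},
          θ' c' * ∑ y, cond (c' ⟨u, huv_ne⟩) y = θ' c' := by
        intro c'
        rcases eq_or_ne (θ' c') 0 with h | h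
        · rw [h, zero_mul]
        · rw [c1 _ (fun h' => h (le_antisymm (le_of_le_of_eq (h0 c') h') (hθ'0 c'))), mul_one]
      have hgroup : ∀ F : {x : ℝ // x ∈ C u} → ℝ,
          (∑ c' : (j : {w : V // w ≠ v}) → {x : ℝ // x ∈ C j.1}, θ' c' * F (c' ⟨u, huv_ne⟩))
            = ∑ t, μU u t * F t := by
        intro F
        have step1 : ∀ c' : (j : {w : V // w ≠ v}) → {x : ℝ // x ∈ C j.1},
            θ' c' * F (c' ⟨u, huv_ne⟩) =
              ∑ t, if c' ⟨u, huv_ne⟩ = t then θ' c' * F t else 0 := by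
          intro c'; rw [Finset.sum_ite_eq]; simp
        rw [Finset.sum_congr rfl fun c' _ => step1 c', Finset.sum_comm]
        refine Finset.sum_congr rfl fun t _ => ?_
        rw [← hθ'U ⟨u, huv_ne⟩ t, Finset.sum_mul]
        exact Finset.sum_congr rfl fun c' _ => by
          by_cases h : c' ⟨u, huv_ne⟩ = t <;> simp [h]
      have hpull : ∀ (P : Prop) [inst : Decidable P] (A : ℝ) (g : {x : ℝ // x ∈ C v} → ℝ),
          ∑ y, (if P then A * g y else 0) = if P then A * ∑ y, g y else 0 := by
        intro P inst A g; split_ifs <;> simp [Finset.mul_sum]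
      refine ⟨θ, ?_, ?_, ?_, ?_⟩
      · intro c; rw [hθdef]; exact mul_nonneg (hθ'0 _) (c0 _ _)
      · rw [hsplit θ]
        rw [Finset.sum_congr rfl fun c' (_ : c' ∈ univ) =>
          Finset.sum_congr rfl fun y (_ : y ∈ univ) => hθeval y c']
        rw [Finset.sum_congr rfl fun c' (_ : c' ∈ univ) => (Finset.mul_sum ..).symm]
        rw [Finset.sum_congr rfl fun c' (_ : c' ∈ univ) => h1 c']
        exact hθ'1
      · intro i x
        by_cases hi : i = v
        · obtain rfl := hi.symm
          rw [hsplit (fun c => if c v = x then θ c else 0)]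
          rw [Finset.sum_congr rfl fun c' (_ : c' ∈ univ) =>
            Finset.sum_congr rfl fun y (_ : y ∈ univ) => show
              (if Φ.symm (y, c') v = x then θ (Φ.symm (y, c')) else 0)
                = (if y = x then θ' c' * cond (c' ⟨u, huv_ne⟩) y else 0) by
              rw [hevv, hθeval]]
          rw [Finset.sum_congr rfl fun c' (_ : c' ∈ univ) => show
            (∑ y, if y = x then θ' c' * cond (c' ⟨u, huv_ne⟩) y else 0)
              = θ' c' * cond (c' ⟨u, huv_ne⟩) x by
            rw [Finset.sum_ite_eq' univ x (fun y => θ' c' * cond (c' ⟨u, huv_ne⟩) y)]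
            simp]
          rw [hgroup (fun t => cond t x)]
          rw [Finset.sum_congr rfl fun t (_ : t ∈ univ) => c2 t x]
          exact hκ2 x
        · rw [hsplit (fun c => if c i = x then θ c else 0)]
          rw [Finset.sum_congr rfl fun c' (_ : c' ∈ univ) =>
            Finset.sum_congr rfl fun y (_ : y ∈ univ) => show
              (if Φ.symm (y, c') i = x then θ (Φ.symm (y, c')) else 0)
                = (if c' ⟨i, hi⟩ = x then θ' c' * cond (c' ⟨u, huv_ne⟩) y else 0) by
              rw [hevne y c' i hi, hθeval]]
          rw [Finset.sum_congr rfl fun c' (_ : c' ∈ univ) =>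
            hpull (c' ⟨i, hi⟩ = x) (θ' c') (fun y => cond (c' ⟨u, huv_ne⟩) y)]
          rw [Finset.sum_congr rfl fun c' (_ : c' ∈ univ) => show
            (if c' ⟨i, hi⟩ = x then θ' c' * ∑ y, cond (c' ⟨u, huv_ne⟩) y else 0)
              = (if c' ⟨i, hi⟩ = x then θ' c' else 0) by
            by_cases h : c' ⟨i, hi⟩ = x
            · rw [if_pos h, if_pos h, h1 c']
            · rw [if_neg h, if_neg h]]
          exact hθ'U ⟨i, hi⟩ x
      · intro i j hij x y
        by_cases hi : i = v
        · obtain rfl := hi.symm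
          obtain rfl := (hIv1 j hij).symm
          rw [hsplit (fun c => if c v = x ∧ c u = y then θ c else 0)]
          rw [Finset.sum_congr rfl fun c' (_ : c' ∈ univ) =>
            Finset.sum_congr rfl fun y' (_ : y' ∈ univ) => show
              (if Φ.symm (y', c') v = x ∧ Φ.symm (y', c') u = y then θ (Φ.symm (y', c')) else 0)
                = (if y' = x then
                    (if c' ⟨u, huv_ne⟩ = y then θ' c' * cond (c' ⟨u, huv_ne⟩) y' else 0) else 0) by
              rw [hevv, hevne y' c' u huv_ne, hθeval, ite_and]]
          rw [Finset.sum_congr rfl fun c' (_ : c' ∈ univ) => show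
            (∑ y', if y' = x then
                (if c' ⟨u, huv_ne⟩ = y then θ' c' * cond (c' ⟨u, huv_ne⟩) y' else 0) else 0)
              = (if c' ⟨u, huv_ne⟩ = y then θ' c' * cond (c' ⟨u, huv_ne⟩) x else 0) by
            rw [Finset.sum_ite_eq' univ x (fun y' =>
              if c' ⟨u, huv_ne⟩ = y then θ' c' * cond (c' ⟨u, huv_ne⟩) y' else 0)]
            simp]
          rw [Finset.sum_congr rfl fun c' (_ : c' ∈ univ) => show
            (if c' ⟨u, huv_ne⟩ = y then θ' c' * cond (c' ⟨u, huv_ne⟩) x else 0)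
              = θ' c' * (if c' ⟨u, huv_ne⟩ = y then cond (c' ⟨u, huv_ne⟩) x else 0) by
            split_ifs <;> simp]
          rw [hgroup (fun t => if t = y then cond t x else 0)]
          rw [Finset.sum_congr rfl fun t (_ : t ∈ univ) => show
            μU u t * (if t = y then cond t x else 0) = if t = y then μU u t * cond t x else 0 by
            split_ifs <;> simp]
          rw [Finset.sum_ite_eq' univ y (fun t => μU u t * cond t x)]
          simp only [Finset.mem_univ, if_true]
          rw [c2 y x]
          exact ((hκ3 y x).2 hij).symm
        · by_cases hj : j = v
          · obtain rfl := hj.symm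
            obtain rfl := (hIv2 i hij).symm
            rw [hsplit (fun c => if c u = x ∧ c v = y then θ c else 0)]
            rw [Finset.sum_congr rfl fun c' (_ : c' ∈ univ) =>
              Finset.sum_congr rfl fun y' (_ : y' ∈ univ) => show
                (if Φ.symm (y', c') u = x ∧ Φ.symm (y', c') v = y then θ (Φ.symm (y', c')) else 0)
                  = (if c' ⟨u, huv_ne⟩ = x then
                      (if y' = y then θ' c' * cond (c' ⟨u, huv_ne⟩) y' else 0) else 0) by
                rw [hevv, hevne y' c' u huv_ne, hθeval, ite_and]]
            rw [Finset.sum_congr rfl fun c' (_ : c' ∈ univ) => show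
              (∑ y', if c' ⟨u, huv_ne⟩ = x then
                  (if y' = y then θ' c' * cond (c' ⟨u, huv_ne⟩) y' else 0) else 0)
                = (if c' ⟨u, huv_ne⟩ = x then θ' c' * cond (c' ⟨u, huv_ne⟩) y else 0) by
              split_ifs with h
              · rw [Finset.sum_ite_eq' univ y (fun y' => θ' c' * cond (c' ⟨u, huv_ne⟩) y')]
                simp
              · simp]
            rw [Finset.sum_congr rfl fun c' (_ : c' ∈ univ) => show
              (if c' ⟨u, huv_ne⟩ = x then θ' c' * cond (c' ⟨u, huv_ne⟩) y else 0)
                = θ' c' * (if c' ⟨u, huv_ne⟩ = x then cond (c' ⟨u, huv_ne⟩) y else 0) by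
              split_ifs <;> simp]
            rw [hgroup (fun t => if t = x then cond t y else 0)]
            rw [Finset.sum_congr rfl fun t (_ : t ∈ univ) => show
              μU u t * (if t = x then cond t y else 0) = if t = x then μU u t * cond t y else 0 by
              split_ifs <;> simp]
            rw [Finset.sum_ite_eq' univ x (fun t => μU u t * cond t y)]
            simp only [Finset.mem_univ, if_true]
            rw [c2 x y]
            exact ((hκ3 x y).1 hij).symm
          · rw [hsplit (fun c => if c i = x ∧ c j = y then θ c else 0)]
            rw [Finset.sum_congr rfl fun c' (_ : c' ∈ univ) =>
              Finset.sum_congr rfl fun y' (_ : y' ∈ univ) => show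
                (if Φ.symm (y', c') i = x ∧ Φ.symm (y', c') j = y then θ (Φ.symm (y', c')) else 0)
                  = (if c' ⟨i, hi⟩ = x ∧ c' ⟨j, hj⟩ = y then
                      θ' c' * cond (c' ⟨u, huv_ne⟩) y' else 0) by
                rw [hevne y' c' i hi, hevne y' c' j hj, hθeval]]
            rw [Finset.sum_congr rfl fun c' (_ : c' ∈ univ) =>
              hpull (c' ⟨i, hi⟩ = x ∧ c' ⟨j, hj⟩ = y) (θ' c')
                (fun y => cond (c' ⟨u, huv_ne⟩) y)]
            rw [Finset.sum_congr rfl fun c' (_ : c' ∈ univ) => show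
              (if c' ⟨i, hi⟩ = x ∧ c' ⟨j, hj⟩ = y then
                  θ' c' * ∑ y', cond (c' ⟨u, huv_ne⟩) y' else 0)
                = (if c' ⟨i, hi⟩ = x ∧ c' ⟨j, hj⟩ = y then θ' c' else 0) by
              by_cases h : c' ⟨i, hi⟩ = x ∧ c' ⟨j, hj⟩ = y
              · rw [if_pos h, if_pos h, h1 c']
              · rw [if_neg h, if_neg h]]
            exact hθ'B ⟨i, hi⟩ ⟨j, hj⟩ ((hE'mem _ _).mpr hij) x y

/-- Nonemptiness of the Fréchet class on a tree: consistent univariate and bivariate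
marginals on a tree admit a joint distribution realizing them. -/
theorem stmt4
    (n : ℕ) (hn : 1 ≤ n) (C : Fin n → Finset ℝ) (hC : ∀ i, (C i).Nonempty)
    (E : Finset (Fin n × Fin n)) (hE : IsTreeEdges E)
    (μU : (i : Fin n) → {x : ℝ // x ∈ C i} → ℝ) (hμU : ∀ i, IsPmf (μU i))
    (θB : (i j : Fin n) → ({x : ℝ // x ∈ C i} × {y : ℝ // y ∈ C j}) → ℝ)
    (hθB : ∀ i j, (i, j) ∈ E → IsPmf (θB i j))
    (hcons1 : ∀ i j, (i, j) ∈ E → ∀ x : {x : ℝ // x ∈ C i},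
      ∑ y : {y : ℝ // y ∈ C j}, θB i j (x, y) = μU i x)
    (hcons2 : ∀ i j, (i, j) ∈ E → ∀ y : {y : ℝ // y ∈ C j},
      ∑ x : {x : ℝ // x ∈ C i}, θB i j (x, y) = μU j y) :
    ∃ θ : Pt C → ℝ, IsJoint θ ∧ (∀ i, projUni θ i = μU i) ∧
      (∀ i j, (i, j) ∈ E → projBi θ i j = θB i j) := by
  have hanti : ∀ e ∈ E, (e.2, e.1) ∉ E := fun e he h' =>
    absurd (hE.1 _ h') (not_lt.mpr (le_of_lt (hE.1 _ he)))
  obtain ⟨θ, h0, h1, hU, hB⟩ := tree_aux n (Fin n) (Fintype.card_fin n) C E hanti hE.2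
    μU (fun i => hμU i) θB (fun i j h => (hθB i j h).1) hcons1 hcons2
  exact ⟨θ, ⟨h0, h1⟩, fun i => funext fun x => hU i x,
    fun i j h => funext fun p => hB i j h p.1 p.2⟩
end
end

section
/- (Vorob'ev-type counterexample: consistency is not sufficient on a cycle) There is no joint distribution θ on {0,1}³ (i.e., no nonnegative function θ : {0,1} × {0,1} × {0,1} → ℝ summing to 1) whose bivariate marginals proj_{12} θ, proj_{23} θ and proj_{13} θ each assign probability 1/2 to the point (0,1) and probability 1/2 to the point (1,0) (and hence probability 0 to (0,0) and (1,1)), even though these three bivariate pmfs are pairwise consistent with the uniform univariate marginals μ_1 = μ_2 = μ_3 = (1/2, 1/2). -/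
open Finset

/-- Vorob'ev-type counterexample: there is no joint distribution on `{0,1}³` whose three
bivariate marginals each put mass 1/2 on (0,1) and mass 1/2 on (1,0), even though these
bivariate pmfs are pairwise consistent with the uniform univariate marginals. -/
theorem stmt5 :
    ¬ ∃ θ : Fin 2 × Fin 2 × Fin 2 → ℝ,
      (∀ c, 0 ≤ θ c) ∧ (∑ c : Fin 2 × Fin 2 × Fin 2, θ c = 1) ∧
      -- proj₁₂ θ (0,1) = 1/2 and proj₁₂ θ (1,0) = 1/2
      (∑ z : Fin 2, θ (0, 1, z)) = 1 / 2 ∧ (∑ z : Fin 2, θ (1, 0, z)) = 1 / 2 ∧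
      -- proj₂₃ θ (0,1) = 1/2 and proj₂₃ θ (1,0) = 1/2
      (∑ x : Fin 2, θ (x, 0, 1)) = 1 / 2 ∧ (∑ x : Fin 2, θ (x, 1, 0)) = 1 / 2 ∧
      -- proj₁₃ θ (0,1) = 1/2 and proj₁₃ θ (1,0) = 1/2
      (∑ y : Fin 2, θ (0, y, 1)) = 1 / 2 ∧ (∑ y : Fin 2, θ (1, y, 0)) = 1 / 2 := by
  rintro ⟨θ, hpos, hsum, h1, h2, h3, h4, h5, h6⟩
  simp only [Fintype.sum_prod_type, Fin.sum_univ_two] at hsum h1 h2 h3 h4 h5 h6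
  have := hpos (0,0,0)
  have := hpos (0,0,1)
  have := hpos (0,1,0)
  have := hpos (0,1,1)
  have := hpos (1,0,0)
  have := hpos (1,0,1)
  have := hpos (1,1,0)
  have := hpos (1,1,1)
  linarith
end

section
/- (Easy direction of Theorem 3.2: every θ in Θ_ρ yields a feasible point of (cp1) with matching objective) Let θ ∈ Θ_ρ. Then there exist w_k ≥ 0 with Σ_k w_k = 1, nonnegative functions v^k_{ij} : C i × C j → ℝ for (i,j) ∈ E and k ∈ Fin K, and functions v^k_i : C i → ℝ for i ∈ Fin n and k ∈ Fin K, such that: Σ_{y ∈ C j} v^k_{ij}(x,y) = v^k_i(x) and Σ_{x ∈ C i} v^k_{ij}(x,y) = v^k_j(y) for each (i,j) ∈ E and k; Σ_{x ∈ C i} v^k_i(x) = w_k for each i and k; Σ_k v^k_i = μ_i for each i; Σ_k v^k_{ij} = proj_{ij} θ for each (i,j) ∈ E; and Σ_{k} Σ_{i ∈ Fin n} Σ_{x ∈ C i} x * a_{k,i} * v^k_i(x) + Σ_k b_k * w_k = E_θ[ψ]. -/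
open Finset

noncomputable section

lemma marg_sum_j {n : ℕ} {C : Fin n → Finset ℝ} (g : Pt C → ℝ) (i j : Fin n)
    (x : {x : ℝ // x ∈ C i}) :
    ∑ y : {y : ℝ // y ∈ C j}, projBi g i j (x, y) = projUni g i x := by
  unfold projBi projUni
  rw [Finset.sum_comm]
  refine Finset.sum_congr rfl fun c _ => ?_
  by_cases h : c i = x <;> simp [h]

lemma marg_sum_i {n : ℕ} {C : Fin n → Finset ℝ} (g : Pt C → ℝ) (i j : Fin n)
    (y : {y : ℝ // y ∈ C j}) :
    ∑ x : {x : ℝ // x ∈ C i}, projBi g i j (x, y) = projUni g j y := by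
  unfold projBi projUni
  rw [Finset.sum_comm]
  refine Finset.sum_congr rfl fun c _ => ?_
  by_cases h : c j = y <;> simp [h]

lemma uni_total {n : ℕ} {C : Fin n → Finset ℝ} (g : Pt C → ℝ) (i : Fin n) :
    ∑ x : {x : ℝ // x ∈ C i}, projUni g i x = ∑ c : Pt C, g c := by
  unfold projUni
  rw [Finset.sum_comm]
  refine Finset.sum_congr rfl fun c _ => ?_
  simp

lemma uni_weighted {n : ℕ} {C : Fin n → Finset ℝ} (g : Pt C → ℝ) (i : Fin n) (A : ℝ) :
    ∑ x : {x : ℝ // x ∈ C i}, (x : ℝ) * A * projUni g i x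
      = ∑ c : Pt C, ((c i : ℝ) * A) * g c := by
  unfold projUni
  simp only [Finset.mul_sum]
  rw [Finset.sum_comm]
  refine Finset.sum_congr rfl fun c _ => ?_
  rw [Finset.sum_eq_single (c i)]
  · simp [mul_assoc]
  · intro y _ hy; simp [Ne.symm hy]
  · simp

/-- Easy direction of Theorem 3.2: every `θ ∈ Θ_ρ` yields a feasible point of the
polynomial-sized convex program (cp1) whose objective value equals `E_θ[ψ]`. -/
theorem stmt11
    (n : ℕ) (hn : 1 ≤ n) (C : Fin n → Finset ℝ) (hC : ∀ i, (C i).Nonempty)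
    (E : Finset (Fin n × Fin n)) (hE : ∀ e ∈ E, e.1 < e.2)
    (μU : (i : Fin n) → {x : ℝ // x ∈ C i} → ℝ) (hμU : ∀ i, IsPmf (μU i))
    (μB : (i j : Fin n) → ({x : ℝ // x ∈ C i} × {y : ℝ // y ∈ C j}) → ℝ)
    (hμB : ∀ i j, (i, j) ∈ E → IsPmf (μB i j))
    (ρ : ℝ) (hρ : 0 ≤ ρ)
    (K : ℕ) (hK : 1 ≤ K) (a : Fin K → Fin n → ℝ) (b : Fin K → ℝ)
    (θ : Pt C → ℝ) (hθ : InTheta E μU μB ρ θ) :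
    ∃ (w : Fin K → ℝ)
      (v1 : (k : Fin K) → (i : Fin n) → {x : ℝ // x ∈ C i} → ℝ)
      (v2 : (k : Fin K) → (i j : Fin n) →
        ({x : ℝ // x ∈ C i} × {y : ℝ // y ∈ C j}) → ℝ),
      (∀ k, 0 ≤ w k) ∧ (∑ k, w k = 1) ∧
      (∀ k, ∀ i j, (i, j) ∈ E → ∀ p, 0 ≤ v2 k i j p) ∧
      (∀ k, ∀ i j, (i, j) ∈ E → ∀ x : {x : ℝ // x ∈ C i},
        ∑ y : {y : ℝ // y ∈ C j}, v2 k i j (x, y) = v1 k i x) ∧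
      (∀ k, ∀ i j, (i, j) ∈ E → ∀ y : {y : ℝ // y ∈ C j},
        ∑ x : {x : ℝ // x ∈ C i}, v2 k i j (x, y) = v1 k j y) ∧
      (∀ k, ∀ i, ∑ x : {x : ℝ // x ∈ C i}, v1 k i x = w k) ∧
      (∀ i, ∀ x : {x : ℝ // x ∈ C i}, ∑ k, v1 k i x = μU i x) ∧
      (∀ i j, (i, j) ∈ E → ∀ p, ∑ k, v2 k i j p = projBi θ i j p) ∧
      (∑ k, ∑ i, ∑ x : {x : ℝ // x ∈ C i}, (x : ℝ) * a k i * v1 k i x) +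
          (∑ k, b k * w k) = ∑ c : Pt C, θ c * psi a b c := by
  obtain ⟨⟨hθ0, hθ1⟩, hmarg, _⟩ := hθ
  haveI : Nonempty (Fin K) := ⟨⟨0, hK⟩⟩
  -- choose a maximizer of the affine pieces for each c
  have hsel : ∀ c : Pt C, ∃ k : Fin K,
      (∑ i, a k i * (c i : ℝ) + b k) = psi a b c := by
    intro c
    obtain ⟨k, hk⟩ := Finite.exists_max (fun k : Fin K => ∑ i, a k i * (c i : ℝ) + b k)
    refine ⟨k, le_antisymm (le_ciSup (Set.finite_range fun k : Fin K => ∑ i, a k i * (c i : ℝ) + b k).bddAbove k) (ciSup_le hk)⟩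
  choose sel hsel using hsel
  set τ : Fin K → Pt C → ℝ := fun k c => if sel c = k then θ c else 0 with hτ
  have hτ0 : ∀ k c, 0 ≤ τ k c := by
    intro k c; by_cases h : sel c = k <;> simp [hτ, h, hθ0 c]
  have hτsum : ∀ c, ∑ k, τ k c = θ c := by
    intro c; simp [hτ]
  refine ⟨fun k => ∑ c : Pt C, τ k c,
    fun k => projUni (τ k), fun k i j => projBi (τ k) i j,
    ?_, ?_, ?_, ?_, ?_, ?_, ?_, ?_, ?_⟩
  · intro k; exact Finset.sum_nonneg fun c _ => hτ0 k c
  · rw [Finset.sum_comm]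
    rw [← hθ1]
    exact Finset.sum_congr rfl fun c _ => hτsum c
  · intro k i j _ p
    refine Finset.sum_nonneg fun c _ => ?_
    by_cases h : c i = p.1 ∧ c j = p.2 <;> simp [h, hτ0 k c]
  · intro k i j _ x; exact marg_sum_j (τ k) i j x
  · intro k i j _ y; exact marg_sum_i (τ k) i j y
  · intro k i; exact uni_total (τ k) i
  · intro i x
    rw [← hmarg i]
    unfold projUni
    rw [Finset.sum_comm]
    refine Finset.sum_congr rfl fun c _ => ?_
    by_cases h : c i = x <;> simp [h, hτsum c]
  · intro i j _ p
    unfold projBi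
    rw [Finset.sum_comm]
    refine Finset.sum_congr rfl fun c _ => ?_
    by_cases h : c i = p.1 ∧ c j = p.2 <;> simp [h, hτsum c]
  · have key : ∀ k, (∑ i, ∑ x : {x : ℝ // x ∈ C i}, (x : ℝ) * a k i * projUni (τ k) i x)
        + b k * ∑ c : Pt C, τ k c
        = ∑ c : Pt C, τ k c * (∑ i, a k i * (c i : ℝ) + b k) := by
      intro k
      have h1 : ∀ i, ∑ x : {x : ℝ // x ∈ C i}, (x : ℝ) * a k i * projUni (τ k) i x
          = ∑ c : Pt C, ((c i : ℝ) * a k i) * τ k c := fun i => uni_weighted (τ k) i (a k i)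
      simp only [h1]
      rw [Finset.sum_comm, Finset.mul_sum, ← Finset.sum_add_distrib]
      refine Finset.sum_congr rfl fun c _ => ?_
      rw [mul_add, mul_comm (b k), Finset.mul_sum]
      congr 1
      exact Finset.sum_congr rfl fun i _ => by ring
    calc (∑ k, ∑ i, ∑ x : {x : ℝ // x ∈ C i}, (x : ℝ) * a k i * projUni (τ k) i x)
          + (∑ k, b k * ∑ c : Pt C, τ k c)
        = ∑ k, ((∑ i, ∑ x : {x : ℝ // x ∈ C i}, (x : ℝ) * a k i * projUni (τ k) i x)
            + b k * ∑ c : Pt C, τ k c) := by rw [Finset.sum_add_distrib]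
      _ = ∑ k, ∑ c : Pt C, τ k c * (∑ i, a k i * (c i : ℝ) + b k) := by
            exact Finset.sum_congr rfl fun k _ => key k
      _ = ∑ c : Pt C, ∑ k, τ k c * (∑ i, a k i * (c i : ℝ) + b k) := Finset.sum_comm
      _ = ∑ c : Pt C, θ c * psi a b c := by
            refine Finset.sum_congr rfl fun c _ => ?_
            rw [Finset.sum_eq_single (sel c)]
            · simp [hτ, hsel c]
            · intro k _ hk; simp [hτ, Ne.symm hk]
            · simp
end
end

section
/- (Hard direction of Theorem 3.2: every feasible point of (cp1) is dominated by some θ in Θ_ρ) Suppose n ≥ 2 and the edge set E forms a tree on Fin n. Let w_k ≥ 0 with Σ_k w_k = 1, let v^k_{ij} : C i × C j → ℝ be nonnegative for (i,j) ∈ E, k ∈ Fin K, and let v^k_i : C i → ℝ for i ∈ Fin n, k ∈ Fin K, satisfy: Σ_{y ∈ C j} v^k_{ij}(x,y) = v^k_i(x) and Σ_{x ∈ C i} v^k_{ij}(x,y) = v^k_j(y) for each (i,j) ∈ E and k; Σ_{x ∈ C i} v^k_i(x) = w_k for each i and k; Σ_k v^k_i = μ_i for each i; and for each (i,j) ∈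 E, the pmf θ_{ij} = Σ_k v^k_{ij} vanishes wherever μ_{ij} vanishes and satisfies I_KL(θ_{ij}, μ_{ij}) ≤ ρ. Then there exists θ ∈ Θ_ρ such that E_θ[ψ] ≥ Σ_{k} Σ_{i ∈ Fin n} Σ_{x ∈ C i} x * a_{k,i} * v^k_i(x) + Σ_k b_k * w_k. -/
set_option maxHeartbeats 1600000


open Finset

noncomputable section

open SimpleGraph in
lemma tree_struct {V : Type*} [DecidableEq V] {G : SimpleGraph V} (hT : G.IsTree) (r : V) :
    ∃ (par : V → V) (depth : V → ℕ),
      depth r = 0 ∧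
      (∀ i, i ≠ r → G.Adj i (par i)) ∧
      (∀ i, i ≠ r → depth i = depth (par i) + 1) ∧
      (∀ i, depth i = 0 → i = r) ∧
      (∀ i j, G.Adj i j → (i ≠ r ∧ par i = j) ∨ (j ≠ r ∧ par j = i)) := by
  classical
  have hUP : ∀ v w : V, ∃! p : G.Walk v w, p.IsPath :=
    ((isTree_iff_existsUnique_path).mp hT).2
  set P : ∀ v, G.Walk v r := fun v => (hUP v r).choose with hPdef
  have hPpath : ∀ v, (P v).IsPath := fun v => (hUP v r).choose_spec.1
  have hPuniq : ∀ v (q : G.Walk v r), q.IsPath → q = P v :=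
    fun v q hq => (hUP v r).choose_spec.2 q hq
  have hPr : P r = Walk.nil := (hPuniq r Walk.nil (Walk.IsPath.nil)).symm
  refine ⟨fun v => (P v).getVert 1, fun v => (P v).length, ?_, ?_, ?_, ?_, ?_⟩
  · show (P r).length = 0
    rw [hPr]; rfl
  · intro i hi
    show G.Adj i ((P i).getVert 1)
    obtain ⟨j, h, q, heq⟩ := Walk.exists_eq_cons_of_ne hi (P i)
    have hg : (P i).getVert 1 = j := by rw [heq]; simp [Walk.getVert_cons_succ]
    rw [hg]; exact h
  · intro i hi
    show (P i).length = (P ((P i).getVert 1)).length + 1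
    obtain ⟨j, h, q, heq⟩ := Walk.exists_eq_cons_of_ne hi (P i)
    have hg : (P i).getVert 1 = j := by rw [heq]; simp [Walk.getVert_cons_succ]
    have hq : q.IsPath := by
      have := hPpath i; rw [heq] at this; exact this.of_cons
    have hqP : q = P j := hPuniq j q hq
    rw [hg, heq, Walk.length_cons, hqP]
  · intro i hi
    exact Walk.eq_of_length_eq_zero hi
  · intro i j hadj
    have hij : i ≠ j := hadj.ne
    by_cases hmem : i ∈ (P j).support
    · right
      have hjr : j ≠ r := by
        rintro rfl
        rw [hPr] at hmem
        simp only [Walk.support_nil, List.mem_singleton] at hmem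
        exact hij hmem
      refine ⟨hjr, ?_⟩
      show (P j).getVert 1 = i
      have htp : ((P j).takeUntil i hmem).IsPath := (hPpath j).takeUntil hmem
      have hsingle : (Walk.cons hadj.symm Walk.nil : G.Walk j i) = (P j).takeUntil i hmem := by
        have := hT.2.path_unique ⟨Walk.cons hadj.symm Walk.nil, by simp [Ne.symm hij]⟩ ⟨_, htp⟩
        exact congrArg Subtype.val this
      have hPj : P j = Walk.cons hadj.symm ((P j).dropUntil i hmem) := by
        conv_lhs => rw [← (P j).take_spec hmem]
        rw [← hsingle]
        simp
      rw [hPj]; simp [Walk.getVert_cons_succ]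
    · left
      have hir : i ≠ r := by
        rintro rfl
        exact hmem ((P j).end_mem_support)
      refine ⟨hir, ?_⟩
      show (P i).getVert 1 = j
      have hc : Walk.cons hadj (P j) = P i := hPuniq i _ ((hPpath j).cons hmem)
      rw [← hc]; simp [Walk.getVert_cons_succ]


lemma glue {n : ℕ} {C : Fin n → Finset ℝ} (hC : ∀ i, (C i).Nonempty)
    (r : Fin n) (par : Fin n → Fin n) (depth : Fin n → ℕ)
    (hdr : depth r = 0)
    (hd : ∀ i, i ≠ r → depth i = depth (par i) + 1)
    (hd0 : ∀ i, depth i = 0 → i = r)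
    (p : (i : Fin n) → {x : ℝ // x ∈ C i} → ℝ)
    (cond : (i : Fin n) → {y : ℝ // y ∈ C (par i)} → {x : ℝ // x ∈ C i} → ℝ)
    (hprnn : ∀ x, 0 ≤ p r x) (hprsum : ∑ x, p r x = 1)
    (hcnn : ∀ i, i ≠ r → ∀ y x, 0 ≤ cond i y x)
    (hcsum : ∀ i, i ≠ r → ∀ y, ∑ x, cond i y x = 1)
    (hcmarg : ∀ i, i ≠ r → ∀ x, ∑ y, p (par i) y * cond i y x = p i x) :
    ∃ θ : Pt C → ℝ, IsJoint θ ∧ (∀ i, projUni θ i = p i) ∧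
      (∀ i, i ≠ r → ∀ y x, projBi θ (par i) i (y, x) = p (par i) y * cond i y x) := by
  classical
  have hdlt : ∀ i, i ≠ r → depth (par i) < depth i := fun i h => by rw [hd i h]; omega
  set F : Pt C → ℝ := fun c => p r (c r) * ∏ i ∈ univ.erase r, cond i (c (par i)) (c i)
    with hFdef
  set fib : Finset (Fin n) → Pt C → Finset (Pt C) :=
    fun A c0 => univ.filter (fun c => ∀ i ∈ A, c i = c0 i) with hfibdef
  -- the master lemma
  have master : ∀ (m : ℕ) (A : Finset (Fin n)) (c0 : Pt C), (univ \ A).card = m → r ∈ A →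
      (∀ i ∈ A, i ≠ r → par i ∈ A) →
      ∑ c ∈ fib A c0, F c = p r (c0 r) * ∏ i ∈ A.erase r, cond i (c0 (par i)) (c0 i) := by
    intro m
    induction m using Nat.strong_induction_on with
    | _ m IH =>
      intro A c0 hcard hrA hclosed
      by_cases hA : A = univ
      · subst hA
        have hone : fib univ c0 = {c0} := by
          ext c
          simp only [hfibdef, Finset.mem_filter, Finset.mem_univ, true_and,
            Finset.mem_singleton]
          constructor
          · intro h; funext i; exact h i (by simp)
          · rintro rfl; intro i _; rfl
        rw [hone, Finset.sum_singleton]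
      · have hne : (univ \ A).Nonempty := by
          rw [Finset.sdiff_nonempty]
          intro hsub
          exact hA (Finset.eq_univ_iff_forall.mpr (fun i => hsub (Finset.mem_univ i)))
        obtain ⟨i0, hi0mem, hi0min⟩ := Finset.exists_min_image (univ \ A) depth hne
        have hi0A : i0 ∉ A := (Finset.mem_sdiff.mp hi0mem).2
        have hi0r : i0 ≠ r := fun h => hi0A (h ▸ hrA)
        have hpari0 : par i0 ∈ A := by
          by_contra hc
          have h1 : depth i0 ≤ depth (par i0) :=
            hi0min _ (Finset.mem_sdiff.mpr ⟨Finset.mem_univ _, hc⟩)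
          exact absurd (hdlt i0 hi0r) (not_lt.mpr h1)
        have hpari0ne : par i0 ≠ i0 := fun h => hi0A (h ▸ hpari0)
        set A' := insert i0 A with hA'
        have hclosed' : ∀ i ∈ A', i ≠ r → par i ∈ A' := by
          intro i hi hir
          rcases Finset.mem_insert.mp hi with rfl | hiA
          · exact Finset.mem_insert_of_mem hpari0
          · exact Finset.mem_insert_of_mem (hclosed i hiA hir)
        have hcard' : (univ \ A').card < m := by
          have : univ \ A' = (univ \ A).erase i0 := by
            rw [hA']
            ext x
            simp only [Finset.mem_sdiff, Finset.mem_univ, true_and, Finset.mem_insert,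
              Finset.mem_erase]
            tauto
          rw [this, ← hcard]
          exact Finset.card_erase_lt_of_mem hi0mem
        have hsplit : ∑ c ∈ fib A c0, F c =
            ∑ x : {x : ℝ // x ∈ C i0}, ∑ c ∈ (fib A c0).filter (fun c => c i0 = x), F c :=
          (Finset.sum_fiberwise (fib A c0) (fun c => c i0) F).symm
        have hfib : ∀ x : {x : ℝ // x ∈ C i0},
            (fib A c0).filter (fun c => c i0 = x) = fib A' (Function.update c0 i0 x) := by
          intro x
          ext c
          simp only [hfibdef, Finset.filter_filter, Finset.mem_filter, Finset.mem_univ,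
            true_and, hA', Finset.mem_insert]
          constructor
          · rintro ⟨hAeq, hx⟩ i hi
            rcases hi with rfl | hiA
            · rw [hx, Function.update_self]
            · rw [Function.update_of_ne (by rintro rfl; exact hi0A hiA)]
              exact hAeq i hiA
          · intro h
            refine ⟨fun i hiA => ?_, ?_⟩
            · have := h i (Or.inr hiA)
              rwa [Function.update_of_ne (by rintro rfl; exact hi0A hiA)] at this
            · have := h i0 (Or.inl rfl)
              rwa [Function.update_self] at this
        have hIH : ∀ x : {x : ℝ // x ∈ C i0},
            ∑ c ∈ fib A' (Function.update c0 i0 x), F c =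
            p r (c0 r) * (cond i0 (c0 (par i0)) x *
              ∏ i ∈ A.erase r, cond i (c0 (par i)) (c0 i)) := by
          intro x
          rw [IH _ hcard' A' _ rfl (Finset.mem_insert_of_mem hrA) hclosed']
          have hr_ne : r ≠ i0 := Ne.symm hi0r
          have hup_r : Function.update c0 i0 x r = c0 r := Function.update_of_ne hr_ne _ _
          have hA'er : A'.erase r = insert i0 (A.erase r) := by
            rw [hA', Finset.erase_insert_of_ne hi0r]
          rw [hup_r, hA'er, Finset.prod_insert (by simp [hi0A])]
          congr 1
          congr 1
          · rw [Function.update_of_ne hpari0ne, Function.update_self]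
          · apply Finset.prod_congr rfl
            intro i hi
            have hiA : i ∈ A := Finset.mem_of_mem_erase hi
            have hir : i ≠ r := Finset.ne_of_mem_erase hi
            have hine : i ≠ i0 := fun h => hi0A (h ▸ hiA)
            have hparne : par i ≠ i0 := fun h => hi0A (h ▸ hclosed i hiA hir)
            rw [Function.update_of_ne hine, Function.update_of_ne hparne]
        calc ∑ c ∈ fib A c0, F c
            = ∑ x : {x : ℝ // x ∈ C i0}, p r (c0 r) * (cond i0 (c0 (par i0)) x *
              ∏ i ∈ A.erase r, cond i (c0 (par i)) (c0 i)) := by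
              rw [hsplit]
              exact Finset.sum_congr rfl (fun x _ => by rw [hfib x, hIH x])
          _ = p r (c0 r) * ((∑ x : {x : ℝ // x ∈ C i0}, cond i0 (c0 (par i0)) x) *
              ∏ i ∈ A.erase r, cond i (c0 (par i)) (c0 i)) := by
              rw [← Finset.mul_sum, ← Finset.sum_mul]
          _ = p r (c0 r) * ∏ i ∈ A.erase r, cond i (c0 (par i)) (c0 i) := by
              rw [hcsum i0 hi0r, one_mul]
  -- default point
  set c0d : Pt C := fun i => ⟨(hC i).choose, (hC i).choose_spec⟩ with hc0d
  -- ancestors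
  set anc : ℕ → Fin n → Finset (Fin n) :=
    fun d => Nat.rec (motive := fun _ => Fin n → Finset (Fin n))
      (fun u => {u}) (fun _ ih u => insert u (ih (par u))) d with hancdef
  have hanc0 : ∀ u, anc 0 u = {u} := fun u => rfl
  have hancS : ∀ d u, anc (d+1) u = insert u (anc d (par u)) := fun d u => rfl
  have hanc : ∀ d u, depth u = d → u ∈ anc d u ∧ r ∈ anc d u ∧
      (∀ i ∈ anc d u, depth i ≤ d) ∧ (∀ i ∈ anc d u, i ≠ r → par i ∈ anc d u) := by
    intro d
    induction d with
    | zero =>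
      intro u hu
      have hur : u = r := hd0 u hu
      subst hur
      rw [hanc0]
      refine ⟨Finset.mem_singleton_self _, Finset.mem_singleton_self _, ?_, ?_⟩
      · intro i hi; rw [Finset.mem_singleton.mp hi, hu]
      · intro i hi hir; exact absurd (Finset.mem_singleton.mp hi) hir
    | succ d IHd =>
      intro u hu
      have hur : u ≠ r := fun h => by rw [h, hdr] at hu; omega
      have hdp : depth (par u) = d := by have := hd u hur; omega
      obtain ⟨h1, h2, h3, h4⟩ := IHd (par u) hdp
      rw [hancS]
      refine ⟨Finset.mem_insert_self _ _, Finset.mem_insert_of_mem h2, ?_, ?_⟩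
      · intro i hi
        rcases Finset.mem_insert.mp hi with rfl | hi
        · omega
        · exact (h3 i hi).trans (Nat.le_succ d)
      · intro i hi hir
        rcases Finset.mem_insert.mp hi with rfl | hi
        · exact Finset.mem_insert_of_mem h1
        · exact Finset.mem_insert_of_mem (h4 i hi hir)
  -- single-coordinate fibers at the root
  have hrootfib : ∀ x : {x : ℝ // x ∈ C r},
      ∑ c ∈ univ.filter (fun c : Pt C => c r = x), F c = p r x := by
    intro x
    have h1 : univ.filter (fun c : Pt C => c r = x) = fib {r} (Function.update c0d r x) := by
      ext c
      simp only [hfibdef, Finset.mem_filter, Finset.mem_univ, true_and, Finset.mem_singleton]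
      constructor
      · intro h i hi
        subst hi
        rw [Function.update_self]; exact h
      · intro h
        have := h r rfl
        rwa [Function.update_self] at this
    rw [h1, master _ {r} _ rfl (Finset.mem_singleton_self r)
      (fun i hi hir => absurd (Finset.mem_singleton.mp hi) hir)]
    rw [Function.update_self, Finset.erase_singleton, Finset.prod_empty, mul_one]
  have htotal : ∑ c : Pt C, F c = 1 := by
    rw [← Finset.sum_fiberwise univ (fun c : Pt C => c r) F]
    rw [Finset.sum_congr rfl (fun x _ => hrootfib x)]
    exact hprsum
  -- the conditional-factorization step
  have claimH : ∀ u, u ≠ r → ∀ (y : {y : ℝ // y ∈ C (par u)}) (x : {x : ℝ // x ∈ C u}),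
      ∑ c ∈ univ.filter (fun c : Pt C => c (par u) = y ∧ c u = x), F c =
      (∑ c ∈ univ.filter (fun c : Pt C => c (par u) = y), F c) * cond u y x := by
    intro u hur y x
    set A := anc (depth (par u)) (par u) with hAdef
    obtain ⟨hpuA, hrA, hdepA, hclA⟩ := hanc _ (par u) rfl
    have huA : u ∉ A := by
      intro h
      have h1 := hdepA u h
      have h2 := hdlt u hur
      omega
    have hpar_ne_u : par u ≠ u := by intro h; apply huA; rw [← h]; exact hpuA
    have hr_ne_u : r ≠ u := by intro h; apply huA; rw [← h]; exact hrA
    set g : Pt C → Pt C := fun c => fun i => if i ∈ A then c i else c0d i with hgdef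
    have hgA : ∀ c i, i ∈ A → g c i = c i := by intro c i hi; simp [hgdef, hi]
    have hgnA : ∀ c i, i ∉ A → g c i = c0d i := by intro c i hi; simp [hgdef, hi]
    have hgg : ∀ c, g (g c) = g c := by
      intro c; funext i
      by_cases h : i ∈ A
      · rw [hgA _ i h]
      · rw [hgnA _ i h, hgnA _ i h]
    -- hypotheses of `master` for the two ancestor sets
    have hclA' : ∀ i ∈ insert u A, i ≠ r → par i ∈ insert u A := by
      intro i hi hir
      rcases Finset.mem_insert.mp hi with rfl | hi
      · exact Finset.mem_insert_of_mem hpuA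
      · exact Finset.mem_insert_of_mem (hclA i hi hir)
    -- value of the master formula on each fiber class
    have hval : ∀ z : Pt C, z (par u) = y →
        ∑ c ∈ fib (insert u A) (Function.update z u x), F c =
        (∑ c ∈ fib A z, F c) * cond u y x := by
      intro z hz
      rw [master _ (insert u A) _ rfl (Finset.mem_insert_of_mem hrA) hclA',
        master _ A z rfl hrA hclA]
      rw [Finset.erase_insert_of_ne hur, Finset.prod_insert (by simp [huA])]
      rw [Function.update_of_ne hr_ne_u, Function.update_of_ne hpar_ne_u,
        Function.update_self, hz]
      have hprod : ∏ i ∈ A.erase r, cond i (Function.update z u x (par i)) (Function.update z u x i)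
          = ∏ i ∈ A.erase r, cond i (z (par i)) (z i) := by
        apply Finset.prod_congr rfl
        intro i hi
        have hiA : i ∈ A := Finset.mem_of_mem_erase hi
        have hir : i ≠ r := Finset.ne_of_mem_erase hi
        have hine : i ≠ u := by rintro rfl; exact huA hiA
        have hparne : par i ≠ u := by intro h; rw [← h] at huA; exact huA (hclA i hiA hir)
        rw [Function.update_of_ne hine, Function.update_of_ne hparne]
      rw [hprod]
      ring
    -- fibers of the LHS
    have hLfib : ∀ z : Pt C,
        (univ.filter (fun c : Pt C => c (par u) = y ∧ c u = x)).filter (fun c => g c = z) =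
        if z (par u) = y ∧ g z = z then fib (insert u A) (Function.update z u x) else ∅ := by
      intro z
      by_cases hz : z (par u) = y ∧ g z = z
      · rw [if_pos hz]
        ext c
        simp only [Finset.filter_filter, Finset.mem_filter, Finset.mem_univ, true_and,
          hfibdef, Finset.mem_insert]
        constructor
        · rintro ⟨⟨hy, hx⟩, hgc⟩ i hi
          rcases hi with rfl | hiA
          · rw [Function.update_self]; exact hx
          · rw [Function.update_of_ne (by rintro rfl; exact huA hiA)]
            have := congrFun hgc i
            rwa [hgA c i hiA] at this
        · intro h
          have hcx : c u = x := by
            have := h u (Or.inl rfl); rwa [Function.update_self] at this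
          have hcA : ∀ i ∈ A, c i = z i := by
            intro i hi
            have := h i (Or.inr hi)
            rwa [Function.update_of_ne (by rintro rfl; exact huA hi)] at this
          refine ⟨⟨?_, hcx⟩, ?_⟩
          · rw [hcA (par u) hpuA]; exact hz.1
          · funext i
            by_cases hiA : i ∈ A
            · rw [hgA c i hiA]; exact hcA i hiA
            · rw [hgnA c i hiA]
              have := congrFun hz.2 i
              rw [hgnA z i hiA] at this
              exact this
      · rw [if_neg hz]
        ext c
        simp only [Finset.filter_filter, Finset.mem_filter, Finset.mem_univ, true_and,
          Finset.notMem_empty, iff_false, not_and]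
        rintro ⟨hy, hx⟩ hgc
        apply hz
        constructor
        · rw [← hgc, hgA c _ hpuA]; exact hy
        · rw [← hgc]; exact hgg c
    -- fibers of the RHS
    have hRfib : ∀ z : Pt C,
        (univ.filter (fun c : Pt C => c (par u) = y)).filter (fun c => g c = z) =
        if z (par u) = y ∧ g z = z then fib A z else ∅ := by
      intro z
      by_cases hz : z (par u) = y ∧ g z = z
      · rw [if_pos hz]
        ext c
        simp only [Finset.filter_filter, Finset.mem_filter, Finset.mem_univ, true_and, hfibdef]
        constructor
        · rintro ⟨hy, hgc⟩ i hi
          have := congrFun hgc i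
          rwa [hgA c i hi] at this
        · intro h
          have hcA : ∀ i ∈ A, c i = z i := h
          refine ⟨by rw [hcA (par u) hpuA]; exact hz.1, ?_⟩
          funext i
          by_cases hiA : i ∈ A
          · rw [hgA c i hiA]; exact hcA i hiA
          · rw [hgnA c i hiA]
            have := congrFun hz.2 i
            rw [hgnA z i hiA] at this
            exact this
      · rw [if_neg hz]
        ext c
        simp only [Finset.filter_filter, Finset.mem_filter, Finset.mem_univ, true_and,
          Finset.notMem_empty, iff_false, not_and]
        intro hy hgc
        apply hz
        constructor
        · rw [← hgc, hgA c _ hpuA]; exact hy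
        · rw [← hgc]; exact hgg c
    calc ∑ c ∈ univ.filter (fun c : Pt C => c (par u) = y ∧ c u = x), F c
        = ∑ z : Pt C, ∑ c ∈ (univ.filter (fun c : Pt C => c (par u) = y ∧ c u = x)).filter
            (fun c => g c = z), F c :=
          (Finset.sum_fiberwise _ g F).symm
      _ = ∑ z : Pt C, (if z (par u) = y ∧ g z = z then ∑ c ∈ fib A z, F c else 0) *
            cond u y x := by
          apply Finset.sum_congr rfl
          intro z _
          rw [hLfib z]
          by_cases hz : z (par u) = y ∧ g z = z
          · rw [if_pos hz, if_pos hz, hval z hz.1]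
          · rw [if_neg hz, if_neg hz, Finset.sum_empty, zero_mul]
      _ = (∑ z : Pt C, if z (par u) = y ∧ g z = z then ∑ c ∈ fib A z, F c else 0) *
            cond u y x := by rw [Finset.sum_mul]
      _ = (∑ c ∈ univ.filter (fun c : Pt C => c (par u) = y), F c) * cond u y x := by
          congr 1
          rw [← Finset.sum_fiberwise (univ.filter (fun c : Pt C => c (par u) = y)) g F]
          apply Finset.sum_congr rfl
          intro z _
          rw [hRfib z]
          by_cases hz : z (par u) = y ∧ g z = z
          · rw [if_pos hz, if_pos hz]
          · rw [if_neg hz, if_neg hz, Finset.sum_empty]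
  -- univariate marginals
  have claimG : ∀ (d : ℕ) (u : Fin n), depth u = d → ∀ x : {x : ℝ // x ∈ C u},
      ∑ c ∈ univ.filter (fun c : Pt C => c u = x), F c = p u x := by
    intro d
    induction d using Nat.strong_induction_on with
    | _ d IHd =>
      intro u hu x
      by_cases hur : u = r
      · subst hur; exact hrootfib x
      · have hstep : ∀ y : {y : ℝ // y ∈ C (par u)},
            (univ.filter (fun c : Pt C => c u = x)).filter (fun c => c (par u) = y) =
            univ.filter (fun c : Pt C => c (par u) = y ∧ c u = x) := by
          intro y
          rw [Finset.filter_filter]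
          apply Finset.filter_congr
          intro c _
          tauto
        calc ∑ c ∈ univ.filter (fun c : Pt C => c u = x), F c
            = ∑ y : {y : ℝ // y ∈ C (par u)},
              ∑ c ∈ (univ.filter (fun c : Pt C => c u = x)).filter (fun c => c (par u) = y),
                F c := (Finset.sum_fiberwise _ (fun c => c (par u)) F).symm
          _ = ∑ y : {y : ℝ // y ∈ C (par u)},
              (∑ c ∈ univ.filter (fun c : Pt C => c (par u) = y), F c) * cond u y x := by
              apply Finset.sum_congr rfl
              intro y _
              rw [hstep y, claimH u hur y x]
          _ = ∑ y : {y : ℝ // y ∈ C (par u)}, p (par u) y * cond u y x := by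
              apply Finset.sum_congr rfl
              intro y _
              rw [IHd (depth (par u)) (by rw [← hu]; exact hdlt u hur) (par u) rfl y]
          _ = p u x := hcmarg u hur x
  refine ⟨F, ⟨?_, htotal⟩, ?_, ?_⟩
  · intro c
    apply mul_nonneg (hprnn _)
    exact Finset.prod_nonneg fun i hi => hcnn i (Finset.ne_of_mem_erase hi) _ _
  · intro i
    funext x
    show (∑ c : Pt C, if c i = x then F c else 0) = p i x
    rw [← Finset.sum_filter]
    exact claimG (depth i) i rfl x
  · intro i hir y x
    show (∑ c : Pt C, if c (par i) = y ∧ c i = x then F c else 0) = p (par i) y * cond i y x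
    rw [← Finset.sum_filter]
    rw [claimH i hir y x, claimG (depth (par i)) (par i) rfl y]


lemma buildk {n : ℕ} {C : Fin n → Finset ℝ} (hC : ∀ i, (C i).Nonempty)
    (r : Fin n) (par : Fin n → Fin n) (depth : Fin n → ℕ)
    (hdr : depth r = 0)
    (hd : ∀ i, i ≠ r → depth i = depth (par i) + 1)
    (hd0 : ∀ i, depth i = 0 → i = r)
    (wk : ℝ) (hwnn : 0 ≤ wk)
    (v1k : (i : Fin n) → {x : ℝ // x ∈ C i} → ℝ)
    (qqk : (i : Fin n) → {y : ℝ // y ∈ C (par i)} → {x : ℝ // x ∈ C i} → ℝ)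
    (hv1nn : ∀ i x, 0 ≤ v1k i x)
    (hv1sum : ∀ i, ∑ x, v1k i x = wk)
    (hqnn : ∀ i, i ≠ r → ∀ y x, 0 ≤ qqk i y x)
    (hqsumx : ∀ i, i ≠ r → ∀ y, ∑ x, qqk i y x = v1k (par i) y)
    (hqsumy : ∀ i, i ≠ r → ∀ x, ∑ y, qqk i y x = v1k i x) :
    ∃ θ : Pt C → ℝ, IsJoint θ ∧ (∀ i x, wk * projUni θ i x = v1k i x) ∧
      (∀ i, i ≠ r → ∀ y x, wk * projBi θ (par i) i (y, x) = qqk i y x) := by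
  classical
  have hcard : ∀ i : Fin n, (0 : ℝ) < ((C i).card : ℝ) := by
    intro i
    exact_mod_cast Finset.card_pos.mpr (hC i)
  have hsumconst : ∀ i : Fin n, ∑ _x : {x : ℝ // x ∈ C i}, ((C i).card : ℝ)⁻¹ = 1 := by
    intro i
    rw [Finset.sum_const, Finset.card_univ, Fintype.card_coe, nsmul_eq_mul,
      mul_inv_cancel₀ (ne_of_gt (hcard i))]
  set pk : (i : Fin n) → {x : ℝ // x ∈ C i} → ℝ :=
    fun i x => if 0 < wk then v1k i x / wk else ((C i).card : ℝ)⁻¹ with hpk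
  set ck : (i : Fin n) → {y : ℝ // y ∈ C (par i)} → {x : ℝ // x ∈ C i} → ℝ :=
    fun i y x => if 0 < v1k (par i) y then qqk i y x / v1k (par i) y
      else ((C i).card : ℝ)⁻¹ with hck
  have hv1zero : ¬ 0 < wk → ∀ i x, v1k i x = 0 := by
    intro hw i x
    have hw0 : wk = 0 := le_antisymm (not_lt.mp hw) hwnn
    have h1 : ∑ x, v1k i x = 0 := by rw [hv1sum i, hw0]
    have := (Finset.sum_eq_zero_iff_of_nonneg (fun y _ => hv1nn i y)).mp h1
    exact this x (Finset.mem_univ x)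
  have hqzero : ∀ i, i ≠ r → ∀ y, v1k (par i) y = 0 → ∀ x, qqk i y x = 0 := by
    intro i hir y hy x
    have h1 : ∑ x, qqk i y x = 0 := by rw [hqsumx i hir y, hy]
    have := (Finset.sum_eq_zero_iff_of_nonneg (fun z _ => hqnn i hir y z)).mp h1
    exact this x (Finset.mem_univ x)
  obtain ⟨θ, hJ, hU, hB⟩ := glue hC r par depth hdr hd hd0 pk ck
    (by
      intro x
      rw [hpk]
      dsimp only
      split
      · exact div_nonneg (hv1nn r x) hwnn
      · exact le_of_lt (inv_pos.mpr (hcard r)))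
    (by
      rw [hpk]
      dsimp only
      split
      · rw [← Finset.sum_div, hv1sum r, div_self (by positivity)]
      · exact hsumconst r)
    (by
      intro i hir y x
      rw [hck]
      dsimp only
      split
      · exact div_nonneg (hqnn i hir y x) (le_of_lt (by assumption))
      · exact le_of_lt (inv_pos.mpr (hcard i)))
    (by
      intro i hir y
      rw [hck]
      dsimp only
      split
      · rw [← Finset.sum_div, hqsumx i hir y, div_self (by positivity)]
      · exact hsumconst i)
    (by
      intro i hir x
      rw [hpk, hck]
      dsimp only
      by_cases hw : 0 < wk
      · rw [if_pos hw]
        have hterm : ∀ y, (if 0 < wk then v1k (par i) y / wk else ((C (par i)).card : ℝ)⁻¹) *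
            (if 0 < v1k (par i) y then qqk i y x / v1k (par i) y else ((C i).card : ℝ)⁻¹)
            = qqk i y x / wk := by
          intro y
          rw [if_pos hw]
          by_cases hv : 0 < v1k (par i) y
          · rw [if_pos hv]
            field_simp
          · rw [if_neg hv]
            have hv0 : v1k (par i) y = 0 := le_antisymm (not_lt.mp hv) (hv1nn _ y)
            simp [hv0, hqzero i hir y hv0 x]
        rw [Finset.sum_congr rfl (fun y _ => hterm y), ← Finset.sum_div, hqsumy i hir x]
      · rw [if_neg hw]
        have hterm : ∀ y, (if 0 < wk then v1k (par i) y / wk else ((C (par i)).card : ℝ)⁻¹) *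
            (if 0 < v1k (par i) y then qqk i y x / v1k (par i) y else ((C i).card : ℝ)⁻¹)
            = ((C (par i)).card : ℝ)⁻¹ * ((C i).card : ℝ)⁻¹ := by
          intro y
          rw [if_neg hw, if_neg (by rw [hv1zero hw (par i) y]; exact lt_irrefl 0)]
        rw [Finset.sum_congr rfl (fun y _ => hterm y), ← Finset.sum_mul, hsumconst (par i),
          one_mul])
  refine ⟨θ, hJ, ?_, ?_⟩
  · intro i x
    rw [hU i]
    rw [hpk]
    dsimp only
    by_cases hw : 0 < wk
    · rw [if_pos hw, mul_div_cancel₀ _ (ne_of_gt hw)]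
    · rw [if_neg hw, le_antisymm (not_lt.mp hw) hwnn, zero_mul, hv1zero hw i x]
  · intro i hir y x
    rw [hB i hir y x, hpk, hck]
    dsimp only
    by_cases hw : 0 < wk
    · rw [if_pos hw]
      by_cases hv : 0 < v1k (par i) y
      · rw [if_pos hv]
        field_simp
      · rw [if_neg hv]
        have hv0 : v1k (par i) y = 0 := le_antisymm (not_lt.mp hv) (hv1nn _ y)
        simp [hv0, hqzero i hir y hv0 x]
    · rw [if_neg hw, le_antisymm (not_lt.mp hw) hwnn, zero_mul]
      have hv0 : v1k (par i) y = 0 := hv1zero hw (par i) y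
      rw [hqzero i hir y hv0 x]


/-- Hard direction of Theorem 3.2: on a tree, every feasible point of the
polynomial-sized convex program (cp1) is dominated by `E_θ[ψ]` for some `θ ∈ Θ_ρ`. -/
theorem stmt12
    (n : ℕ) (hn : 2 ≤ n) (C : Fin n → Finset ℝ) (hC : ∀ i, (C i).Nonempty)
    (E : Finset (Fin n × Fin n)) (hE : IsTreeEdges E)
    (μU : (i : Fin n) → {x : ℝ // x ∈ C i} → ℝ) (hμU : ∀ i, IsPmf (μU i))
    (μB : (i j : Fin n) → ({x : ℝ // x ∈ C i} × {y : ℝ // y ∈ C j}) → ℝ)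
    (hμB : ∀ i j, (i, j) ∈ E → IsPmf (μB i j))
    (ρ : ℝ) (hρ : 0 ≤ ρ)
    (K : ℕ) (hK : 1 ≤ K) (a : Fin K → Fin n → ℝ) (b : Fin K → ℝ)
    (w : Fin K → ℝ)
    (v1 : (k : Fin K) → (i : Fin n) → {x : ℝ // x ∈ C i} → ℝ)
    (v2 : (k : Fin K) → (i j : Fin n) →
      ({x : ℝ // x ∈ C i} × {y : ℝ // y ∈ C j}) → ℝ)
    (hw : ∀ k, 0 ≤ w k) (hwsum : ∑ k, w k = 1)
    (hv2nn : ∀ k, ∀ i j, (i, j) ∈ E → ∀ p, 0 ≤ v2 k i j p)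
    (hmarg1 : ∀ k, ∀ i j, (i, j) ∈ E → ∀ x : {x : ℝ // x ∈ C i},
      ∑ y : {y : ℝ // y ∈ C j}, v2 k i j (x, y) = v1 k i x)
    (hmarg2 : ∀ k, ∀ i j, (i, j) ∈ E → ∀ y : {y : ℝ // y ∈ C j},
      ∑ x : {x : ℝ // x ∈ C i}, v2 k i j (x, y) = v1 k j y)
    (hv1sum : ∀ k, ∀ i, ∑ x : {x : ℝ // x ∈ C i}, v1 k i x = w k)
    (hμmatch : ∀ i, ∀ x : {x : ℝ // x ∈ C i}, ∑ k, v1 k i x = μU i x)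
    (hKL : ∀ i j, (i, j) ∈ E →
      Vanishes (fun p => ∑ k, v2 k i j p) (μB i j) ∧
      KL (fun p => ∑ k, v2 k i j p) (μB i j) ≤ ρ) :
    ∃ θ : Pt C → ℝ, InTheta E μU μB ρ θ ∧
      (∑ k, ∑ i, ∑ x : {x : ℝ // x ∈ C i}, (x : ℝ) * a k i * v1 k i x) +
          (∑ k, b k * w k) ≤ ∑ c : Pt C, θ c * psi a b c := by
  classical
  obtain ⟨hord, hT⟩ := hE
  have hnr : (0:ℕ) < n := by omega
  set r : Fin n := ⟨0, hnr⟩ with hrdef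
  obtain ⟨par, depth, hdr, hadj, hd, hd0, hedge⟩ := tree_struct hT r
  have hadjE : ∀ i j : Fin n, (treeGraph E).Adj i j → ((i,j) ∈ E ∨ (j,i) ∈ E) := by
    intro i j h
    rw [treeGraph, SimpleGraph.fromRel_adj] at h
    exact h.2
  have hEadj : ∀ i j, (i,j) ∈ E → (treeGraph E).Adj i j := by
    intro i j h
    rw [treeGraph, SimpleGraph.fromRel_adj]
    exact ⟨ne_of_lt (hord _ h), Or.inl h⟩
  have hnotboth : ∀ i j : Fin n, (i,j) ∈ E → (j,i) ∉ E := by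
    intro i j h1 h2
    have g1 := hord _ h1
    have g2 := hord _ h2
    exact absurd g2 (not_lt.mpr (le_of_lt g1))
  -- every vertex is incident to an edge
  have hnbr_r : ∃ j, (treeGraph E).Adj r j := by
    have haux : ∀ (d : ℕ) (i : Fin n), depth i = d → i ≠ r → ∃ j, (treeGraph E).Adj r j := by
      intro d
      induction d using Nat.strong_induction_on with
      | _ d IH =>
        intro i hdi hir
        by_cases hp : par i = r
        · exact ⟨i, by rw [← hp]; exact (hadj i hir).symm⟩
        · exact IH (depth (par i)) (by rw [← hdi, hd i hir]; omega) (par i) rfl hp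
    refine haux (depth ⟨1, by omega⟩) ⟨1, by omega⟩ rfl ?_
    rw [hrdef]
    simp [Fin.ext_iff]
  have hincident : ∀ i : Fin n, ∃ j, (i,j) ∈ E ∨ (j,i) ∈ E := by
    intro i
    by_cases hir : i = r
    · subst hir
      obtain ⟨j, hj⟩ := hnbr_r
      exact ⟨j, hadjE _ _ hj⟩
    · exact ⟨par i, hadjE _ _ (hadj i hir)⟩
  have hv1nn : ∀ k i x, 0 ≤ v1 k i x := by
    intro k i x
    obtain ⟨j, hj | hj⟩ := hincident i
    · rw [← hmarg1 k i j hj x]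
      exact Finset.sum_nonneg fun y _ => hv2nn k i j hj _
    · rw [← hmarg2 k j i hj x]
      exact Finset.sum_nonneg fun y _ => hv2nn k j i hj _
  set qq : (k : Fin K) → (i : Fin n) → {y : ℝ // y ∈ C (par i)} → {x : ℝ // x ∈ C i} → ℝ :=
    fun k i y x => if (par i, i) ∈ E then v2 k (par i) i (y, x) else v2 k i (par i) (x, y)
    with hqq
  have hedgeO : ∀ i, i ≠ r → (par i, i) ∈ E ∨ ((par i, i) ∉ E ∧ (i, par i) ∈ E) := by
    intro i hir
    by_cases h : (par i, i) ∈ E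
    · exact Or.inl h
    · rcases hadjE _ _ (hadj i hir) with h1 | h1
      · exact Or.inr ⟨h, h1⟩
      · exact absurd h1 h
  have hqnn : ∀ k i, i ≠ r → ∀ y x, 0 ≤ qq k i y x := by
    intro k i hir y x
    rcases hedgeO i hir with h | ⟨h, h2⟩
    · rw [hqq]; dsimp only; rw [if_pos h]; exact hv2nn k _ _ h _
    · rw [hqq]; dsimp only; rw [if_neg h]; exact hv2nn k _ _ h2 _
  have hqsumx : ∀ k i, i ≠ r → ∀ y, ∑ x, qq k i y x = v1 k (par i) y := by
    intro k i hir y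
    rcases hedgeO i hir with h | ⟨h, h2⟩
    · rw [hqq]; dsimp only; rw [Finset.sum_congr rfl (fun x _ => if_pos h)]
      exact hmarg1 k (par i) i h y
    · rw [hqq]; dsimp only; rw [Finset.sum_congr rfl (fun x _ => if_neg h)]
      exact hmarg2 k i (par i) h2 y
  have hqsumy : ∀ k i, i ≠ r → ∀ x, ∑ y, qq k i y x = v1 k i x := by
    intro k i hir x
    rcases hedgeO i hir with h | ⟨h, h2⟩
    · rw [hqq]; dsimp only; rw [Finset.sum_congr rfl (fun y _ => if_pos h)]
      exact hmarg2 k (par i) i h x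
    · rw [hqq]; dsimp only; rw [Finset.sum_congr rfl (fun y _ => if_neg h)]
      exact hmarg1 k i (par i) h2 x
  have hbuild : ∀ k, ∃ θ, IsJoint θ ∧ (∀ i x, w k * projUni θ i x = v1 k i x) ∧
      (∀ i, i ≠ r → ∀ y x, w k * projBi θ (par i) i (y,x) = qq k i y x) :=
    fun k => buildk hC r par depth hdr hd hd0 (w k) (hw k) (v1 k) (qq k)
      (fun i x => hv1nn k i x) (hv1sum k) (hqnn k) (hqsumx k) (hqsumy k)
  choose θk hJ hU hB using hbuild
  set θ : Pt C → ℝ := fun c => ∑ k, w k * θk k c with hθ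
  have hJoint : IsJoint θ := by
    constructor
    · intro c
      exact Finset.sum_nonneg fun k _ => mul_nonneg (hw k) ((hJ k).1 c)
    · rw [hθ]
      dsimp only
      rw [Finset.sum_comm]
      calc ∑ k, ∑ c : Pt C, w k * θk k c
          = ∑ k, w k * ∑ c : Pt C, θk k c := by
            apply Finset.sum_congr rfl
            intro k _
            rw [Finset.mul_sum]
        _ = ∑ k, w k := by
            apply Finset.sum_congr rfl
            intro k _
            rw [(hJ k).2, mul_one]
        _ = 1 := hwsum
  have hPU : ∀ i x, projUni θ i x = ∑ k, w k * projUni (θk k) i x := by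
    intro i x
    show (∑ c : Pt C, if c i = x then θ c else 0) = _
    calc ∑ c : Pt C, (if c i = x then θ c else 0)
        = ∑ c : Pt C, ∑ k, (if c i = x then w k * θk k c else 0) := by
          apply Finset.sum_congr rfl
          intro c _
          split
          · rfl
          · rw [Finset.sum_const_zero]
      _ = ∑ k, ∑ c : Pt C, (if c i = x then w k * θk k c else 0) := Finset.sum_comm
      _ = ∑ k, w k * projUni (θk k) i x := by
          apply Finset.sum_congr rfl
          intro k _
          rw [projUni, Finset.mul_sum]
          apply Finset.sum_congr rfl
          intro c _
          rw [mul_ite, mul_zero]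
  have hPB : ∀ (i j : Fin n) (pt : {x : ℝ // x ∈ C i} × {y : ℝ // y ∈ C j}),
      projBi θ i j pt = ∑ k, w k * projBi (θk k) i j pt := by
    intro i j pt
    show (∑ c : Pt C, if c i = pt.1 ∧ c j = pt.2 then θ c else 0) = _
    calc ∑ c : Pt C, (if c i = pt.1 ∧ c j = pt.2 then θ c else 0)
        = ∑ c : Pt C, ∑ k, (if c i = pt.1 ∧ c j = pt.2 then w k * θk k c else 0) := by
          apply Finset.sum_congr rfl
          intro c _
          split
          · rfl
          · rw [Finset.sum_const_zero]
      _ = ∑ k, ∑ c : Pt C, (if c i = pt.1 ∧ c j = pt.2 then w k * θk k c else 0) :=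
          Finset.sum_comm
      _ = ∑ k, w k * projBi (θk k) i j pt := by
          apply Finset.sum_congr rfl
          intro k _
          rw [projBi, Finset.mul_sum]
          apply Finset.sum_congr rfl
          intro c _
          rw [mul_ite, mul_zero]
  have hUtot : ∀ i, projUni θ i = μU i := by
    intro i
    funext x
    rw [hPU i x, Finset.sum_congr rfl (fun k _ => hU k i x), hμmatch i x]
  have hBtot : ∀ i j, (i,j) ∈ E → projBi θ i j = (fun pt => ∑ k, v2 k i j pt) := by
    intro i j hij
    funext pt
    obtain ⟨x, y⟩ := pt
    rcases hedge i j (hEadj i j hij) with ⟨hir, hpi⟩ | ⟨hjr, hpj⟩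
    · subst hpi
      have hsym : projBi θ i (par i) (x, y) = projBi θ (par i) i (y, x) := by
        rw [projBi, projBi]
        apply Finset.sum_congr rfl
        intro c _
        exact if_congr (by constructor <;> (rintro ⟨h1, h2⟩; exact ⟨h2, h1⟩)) rfl rfl
      show projBi θ i (par i) (x, y) = ∑ k, v2 k i (par i) (x, y)
      rw [hsym, hPB (par i) i (y, x), Finset.sum_congr rfl (fun k _ => hB k i hir y x)]
      apply Finset.sum_congr rfl
      intro k _
      rw [hqq]
      dsimp only
      rw [if_neg (hnotboth _ _ hij)]
    · subst hpj
      show projBi θ (par j) j (x, y) = ∑ k, v2 k (par j) j (x, y)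
      rw [hPB (par j) j (x, y), Finset.sum_congr rfl (fun k _ => hB k j hjr x y)]
      apply Finset.sum_congr rfl
      intro k _
      rw [hqq]
      dsimp only
      rw [if_pos hij]
  have hpsi_ge : ∀ k (c : Pt C), (∑ i, a k i * (c i : ℝ) + b k) ≤ psi a b c := by
    intro k c
    rw [psi]
    exact le_ciSup (f := fun k : Fin K => ∑ i, a k i * (c i : ℝ) + b k)
      (Set.Finite.bddAbove (Set.finite_range _)) k
  have hmean : ∀ k i, w k * ∑ c : Pt C, θk k c * (c i : ℝ)
      = ∑ x : {x : ℝ // x ∈ C i}, (x:ℝ) * v1 k i x := by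
    intro k i
    have h1 : ∑ c : Pt C, θk k c * (c i : ℝ)
        = ∑ x : {x : ℝ // x ∈ C i}, (x : ℝ) * projUni (θk k) i x := by
      calc ∑ c : Pt C, θk k c * ((c i : {x : ℝ // x ∈ C i}) : ℝ)
          = ∑ c : Pt C, ∑ x : {x : ℝ // x ∈ C i},
              (if c i = x then (x:ℝ) * θk k c else 0) := by
            apply Finset.sum_congr rfl
            intro c _
            rw [Finset.sum_ite_eq Finset.univ (c i) (fun x => (x:ℝ) * θk k c),
              if_pos (Finset.mem_univ _), mul_comm]
        _ = ∑ x : {x : ℝ // x ∈ C i}, ∑ c : Pt C,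
              (if c i = x then (x:ℝ) * θk k c else 0) := Finset.sum_comm
        _ = ∑ x : {x : ℝ // x ∈ C i}, (x : ℝ) * projUni (θk k) i x := by
            apply Finset.sum_congr rfl
            intro x _
            rw [projUni, Finset.mul_sum]
            apply Finset.sum_congr rfl
            intro c _
            rw [mul_ite, mul_zero]
    rw [h1, Finset.mul_sum]
    apply Finset.sum_congr rfl
    intro x _
    rw [← hU k i x]
    ring
  have hobj : ∀ k, (∑ i, ∑ x : {x : ℝ // x ∈ C i}, (x:ℝ) * a k i * v1 k i x) + b k * w k
      ≤ w k * ∑ c : Pt C, θk k c * psi a b c := by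
    intro k
    have h2 : ∑ c : Pt C, θk k c * (∑ i, a k i * (c i:ℝ) + b k)
        ≤ ∑ c : Pt C, θk k c * psi a b c :=
      Finset.sum_le_sum fun c _ => mul_le_mul_of_nonneg_left (hpsi_ge k c) ((hJ k).1 c)
    have h3 : ∑ c : Pt C, θk k c * (∑ i, a k i * (c i:ℝ) + b k)
        = (∑ i, a k i * ∑ c : Pt C, θk k c * (c i:ℝ)) + b k := by
      calc ∑ c : Pt C, θk k c * (∑ i, a k i * (c i:ℝ) + b k)
          = ∑ c : Pt C, ((∑ i, θk k c * (a k i * (c i:ℝ))) + θk k c * b k) := by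
            apply Finset.sum_congr rfl
            intro c _
            rw [mul_add, Finset.mul_sum]
        _ = (∑ c : Pt C, ∑ i, θk k c * (a k i * (c i:ℝ))) + ∑ c : Pt C, θk k c * b k :=
            Finset.sum_add_distrib
        _ = (∑ i, a k i * ∑ c : Pt C, θk k c * (c i:ℝ)) + b k := by
            congr 1
            · rw [Finset.sum_comm]
              apply Finset.sum_congr rfl
              intro i _
              rw [Finset.mul_sum]
              apply Finset.sum_congr rfl
              intro c _
              ring
            · rw [← Finset.sum_mul, (hJ k).2, one_mul]
    have h4 : (∑ i, ∑ x : {x : ℝ // x ∈ C i}, (x:ℝ) * a k i * v1 k i x) + b k * w k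
        = w k * ((∑ i, a k i * ∑ c : Pt C, θk k c * (c i:ℝ)) + b k) := by
      rw [mul_add]
      congr 1
      · rw [Finset.mul_sum]
        apply Finset.sum_congr rfl
        intro i _
        rw [mul_left_comm, hmean k i, Finset.mul_sum]
        apply Finset.sum_congr rfl
        intro x _
        ring
      · ring
    calc (∑ i, ∑ x : {x : ℝ // x ∈ C i}, (x:ℝ) * a k i * v1 k i x) + b k * w k
        = w k * ∑ c : Pt C, θk k c * (∑ i, a k i * (c i:ℝ) + b k) := by rw [h4, h3]
      _ ≤ w k * ∑ c : Pt C, θk k c * psi a b c := mul_le_mul_of_nonneg_left h2 (hw k)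
  refine ⟨θ, ⟨hJoint, hUtot, ?_⟩, ?_⟩
  · intro i j hij
    rw [hBtot i j hij]
    exact hKL i j hij
  · calc (∑ k, ∑ i, ∑ x : {x : ℝ // x ∈ C i}, (x : ℝ) * a k i * v1 k i x) + ∑ k, b k * w k
        = ∑ k, ((∑ i, ∑ x : {x : ℝ // x ∈ C i}, (x:ℝ) * a k i * v1 k i x) + b k * w k) :=
          Finset.sum_add_distrib.symm
      _ ≤ ∑ k, w k * ∑ c : Pt C, θk k c * psi a b c := Finset.sum_le_sum fun k _ => hobj k
      _ = ∑ c : Pt C, θ c * psi a b c := by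
          calc ∑ k, w k * ∑ c : Pt C, θk k c * psi a b c
              = ∑ k, ∑ c : Pt C, w k * (θk k c * psi a b c) := by
                apply Finset.sum_congr rfl
                intro k _
                rw [Finset.mul_sum]
            _ = ∑ c : Pt C, ∑ k, w k * (θk k c * psi a b c) := Finset.sum_comm
            _ = ∑ c : Pt C, θ c * psi a b c := by
                apply Finset.sum_congr rfl
                intro c _
                rw [hθ]
                dsimp only
                rw [Finset.sum_mul]
                apply Finset.sum_congr rfl
                intro k _
                ring
end
end
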